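/- arXiv:1907.10531 — 5 statements merged into one kernel-verified Lean document; each statement's English description precedes it below -/
import Mathlib

section
/- Let h : [a,b] → ℝ be a convex function with minimum value zero on [a,b], where 0 < a < b and n ≥ 1. Then ∫_a^b e^{-h(z)} h(z) z^{n-1} dz ≤ (n+1) ∫_a^b e^{-h(z)} z^{n-1} dz. -/
open MeasureTheory Real Set

lemma aux_exp_quad (y : ℝ) (hy : 0 ≤ y) : Real.exp (-y) ≤ 1 - y + y ^ 2 := by
  have h3 := Real.add_one_le_exp y
  have h4 : Real.exp (-y) * Real.exp y = 1 := by rw [← Real.exp_add]; simp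
  have h5 := Real.exp_pos y
  have h6 := Real.exp_pos (-y)
  nlinarith

set_option maxHeartbeats 1000000

/-- Lemma (paper, Lemma `Rn_KV`): for a convex function `h` on `[a,b] ⊂ (0,∞)` with
minimum value zero, `∫_a^b e^{-h} h z^{n-1} ≤ (n+1) ∫_a^b e^{-h} z^{n-1}`. -/
theorem stmt_0 (a b : ℝ) (ha : 0 < a) (hab : a < b) (n : ℕ) (hn : 1 ≤ n)
    (h : ℝ → ℝ) (hconv : ConvexOn ℝ (Set.Icc a b) h)
    (hcont : ContinuousOn h (Set.Icc a b))
    (hmin : IsGLB (h '' Set.Icc a b) 0) :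
    ∫ z in a..b, Real.exp (-h z) * h z * z ^ (n - 1) ≤
      (n + 1) * ∫ z in a..b, Real.exp (-h z) * z ^ (n - 1) := by
  have hab' : a ≤ b := hab.le
  obtain ⟨z0, hz0mem, hz0min⟩ :=
    isCompact_Icc.exists_isMinOn (Set.nonempty_Icc.mpr hab') hcont
  have hz00 : h z0 = 0 := by
    refine le_antisymm ?_ (hmin.1 ⟨z0, hz0mem, rfl⟩)
    exact hmin.2 (fun y hy => by obtain ⟨x, hx, rfl⟩ := hy; exact hz0min hx)
  have hhnn : ∀ z ∈ Set.Icc a b, 0 ≤ h z := fun z hz => hmin.1 ⟨z, hz, rfl⟩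
  have hcont_exp : ContinuousOn (fun z => Real.exp (-h z)) (Set.Icc a b) :=
    Real.continuous_exp.comp_continuousOn hcont.neg
  have key : ∀ f : ℝ → ℝ, ContinuousOn f (Set.Icc a b) →
      ∀ x y, a ≤ x → y ≤ b → x ≤ y → IntervalIntegrable f volume x y := by
    intro f hf x y hx hy hxy
    apply ContinuousOn.intervalIntegrable
    rw [Set.uIcc_of_le hxy]
    exact hf.mono (Set.Icc_subset_Icc hx hy)
  set I := ∫ z in a..b, Real.exp (-h z) * z ^ (n - 1) with hIdef
  set M := ∫ z in a..b, Real.exp (-h z) * (h z) ^ 2 * z ^ (n - 1) with hMdef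
  have hcontB : ContinuousOn (fun z => Real.exp (-h z) * z ^ (n - 1)) (Set.Icc a b) :=
    hcont_exp.mul (continuous_pow _).continuousOn
  have hcontA : ContinuousOn (fun z => Real.exp (-h z) * h z * z ^ (n - 1)) (Set.Icc a b) :=
    (hcont_exp.mul hcont).mul (continuous_pow _).continuousOn
  have hcontC : ContinuousOn (fun z => Real.exp (-h z) * (h z) ^ 2 * z ^ (n - 1))
      (Set.Icc a b) :=
    (hcont_exp.mul (hcont.pow 2)).mul (continuous_pow _).continuousOn
  have intA := key _ hcontA a b le_rfl le_rfl hab'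
  have intB := key _ hcontB a b le_rfl le_rfl hab'
  have intC := key _ hcontC a b le_rfl le_rfl hab'
  have hIpos : 0 < I := by
    rw [hIdef]
    refine intervalIntegral.intervalIntegral_pos_of_pos_on intB ?_ hab
    intro x hx
    have hxa : 0 < x := ha.trans hx.1
    positivity
  have hMnn : 0 ≤ M := by
    rw [hMdef]
    apply intervalIntegral.integral_nonneg hab'
    intro u hu
    have : 0 < u := lt_of_lt_of_le ha hu.1
    positivity
  set ε := I / (M + 1) with hεdef
  have hεpos : 0 < ε := div_pos hIpos (by linarith)
  have hεM : ε * (M + 1) = I := by rw [hεdef]; field_simp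
  set c := (1 + ε)⁻¹ with hcdef
  have hppos : 0 < 1 + ε := by linarith
  have hcpos : 0 < c := by rw [hcdef]; positivity
  have hc1 : c ≤ 1 := by rw [hcdef]; exact inv_le_one_of_one_le₀ (by linarith)
  have hpc : (1 + ε) * c = 1 := mul_inv_cancel₀ (ne_of_gt hppos)
  set d := (1 - c) * z0 with hddef
  have hz0a : a ≤ z0 := hz0mem.1
  have hz0b : z0 ≤ b := hz0mem.2
  have hmap : ∀ u ∈ Set.Icc a b, c * u + d ∈ Set.Icc a b := by
    intro u hu
    obtain ⟨hu1, hu2⟩ := hu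
    constructor
    · nlinarith
    · nlinarith
  set f := fun z => Real.exp (-((1 + ε) * h z)) * z ^ (n - 1) with hfdef
  have hcontF : ContinuousOn f (Set.Icc a b) :=
    (Real.continuous_exp.comp_continuousOn
      ((continuousOn_const.mul hcont).neg)).mul (continuous_pow _).continuousOn
  have intF := key _ hcontF a b le_rfl le_rfl hab'
  set J := ∫ z in a..b, f z with hJdef
  have hcn : c ^ n = c * c ^ (n - 1) := by
    conv_lhs => rw [← Nat.sub_add_cancel hn]
    rw [pow_succ]; ring
  -- Step 2 pointwise
  have hpt2 : ∀ u ∈ Set.Icc a b,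
      c ^ n * (Real.exp (-h u) * u ^ (n - 1)) ≤ c * f (c * u + d) := by
    intro u hu
    have hmem := hmap u hu
    have hconvu : h (c * u + d) ≤ c * h u := by
      have h2 := hconv.2 hu hz0mem hcpos.le (by linarith : (0:ℝ) ≤ 1 - c) (by ring)
      simpa [smul_eq_mul, hddef, hz00] using h2
    have hupos : 0 < u := lt_of_lt_of_le ha hu.1
    have hcu : (0:ℝ) < c * u := by positivity
    have hd0 : 0 ≤ d := by rw [hddef]; nlinarith
    have hexp : Real.exp (-h u) ≤ Real.exp (-((1 + ε) * h (c * u + d))) := by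
      apply Real.exp_le_exp.mpr
      have h7 : (1 + ε) * (c * h u) = h u := by rw [← mul_assoc, hpc, one_mul]
      have h8 : (1 + ε) * h (c * u + d) ≤ (1 + ε) * (c * h u) :=
        mul_le_mul_of_nonneg_left hconvu hppos.le
      linarith
    have hpow : (c * u) ^ (n - 1) ≤ (c * u + d) ^ (n - 1) :=
      pow_le_pow_left₀ hcu.le (by linarith) _
    have hstep : Real.exp (-h u) * (c * u) ^ (n - 1) ≤ f (c * u + d) := by
      simp only [hfdef]
      exact mul_le_mul hexp hpow (by positivity) (Real.exp_pos _).le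
    calc c ^ n * (Real.exp (-h u) * u ^ (n - 1))
        = c * (Real.exp (-h u) * (c * u) ^ (n - 1)) := by
          rw [mul_pow, hcn]; ring
      _ ≤ c * f (c * u + d) := mul_le_mul_of_nonneg_left hstep hcpos.le
  have hG : ContinuousOn (fun u => c * f (c * u + d)) (Set.Icc a b) := by
    apply continuousOn_const.mul
    exact hcontF.comp (((continuous_const.mul continuous_id).add
      continuous_const).continuousOn) (fun u hu => hmap u hu)
  have intG := key _ hG a b le_rfl le_rfl hab'
  have step2 : c ^ n * I ≤ J := by
    have h1 : c ^ n * I = ∫ u in a..b, c ^ n * (Real.exp (-h u) * u ^ (n - 1)) := by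
      rw [intervalIntegral.integral_const_mul]
    have h2 : (∫ u in a..b, c ^ n * (Real.exp (-h u) * u ^ (n - 1)))
        ≤ ∫ u in a..b, c * f (c * u + d) :=
      intervalIntegral.integral_mono_on hab' (intB.const_mul _) intG hpt2
    have h3 : (∫ u in a..b, c * f (c * u + d)) = c • ∫ u in a..b, f (c * u + d) := by
      rw [intervalIntegral.integral_const_mul]; rfl
    have h4 : (c • ∫ u in a..b, f (c * u + d))
        = ∫ x in (c * a + d)..(c * b + d), f x :=
      intervalIntegral.smul_integral_comp_mul_add f c d
    have ha' : a ≤ c * a + d := (hmap a ⟨le_rfl, hab'⟩).1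
    have hb' : c * b + d ≤ b := (hmap b ⟨hab', le_rfl⟩).2
    have hsub : (∫ x in (c * a + d)..(c * b + d), f x) ≤ J := by
      rw [hJdef]
      refine intervalIntegral.integral_mono_interval ha' (by nlinarith) hb' ?_ intF
      refine (ae_restrict_iff' measurableSet_Ioc).mpr (Filter.Eventually.of_forall ?_)
      intro x hx
      have hx0 : 0 < x := ha.trans hx.1
      simp only [hfdef, Pi.zero_apply]
      positivity
    calc c ^ n * I = ∫ u in a..b, c ^ n * (Real.exp (-h u) * u ^ (n - 1)) := h1
      _ ≤ ∫ u in a..b, c * f (c * u + d) := h2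
      _ = ∫ x in (c * a + d)..(c * b + d), f x := by rw [h3, h4]
      _ ≤ J := hsub
  -- Bernoulli-type bound
  have hBern : 1 - (n:ℝ) * ε ≤ c ^ n := by
    rcases le_or_gt (1 - (n:ℝ) * ε) 0 with hc0 | hc0
    · exact hc0.trans (by positivity)
    · have hpow : (0:ℝ) < (1 + ε) ^ n := by positivity
      have hkey : (1 - (n:ℝ) * ε) * (1 + ε) ^ n ≤ 1 := by
        have e1 : (1 + ε : ℝ) ≤ Real.exp ε := by linarith [Real.add_one_le_exp ε]
        have e2 : (1 + ε : ℝ) ^ n ≤ Real.exp ε ^ n := pow_le_pow_left₀ (by linarith) e1 n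
        have e3 : Real.exp ε ^ n = Real.exp ((n:ℝ) * ε) := by rw [← Real.exp_nat_mul]
        have e23 : (1 + ε : ℝ) ^ n ≤ Real.exp ((n:ℝ) * ε) := e3 ▸ e2
        have e4 : 1 - (n:ℝ) * ε ≤ Real.exp (-((n:ℝ) * ε)) := by
          linarith [Real.add_one_le_exp (-((n:ℝ) * ε))]
        have e5 : Real.exp (-((n:ℝ) * ε)) * Real.exp ((n:ℝ) * ε) = 1 := by
          rw [← Real.exp_add]; simp
        have s1 : (1 - (n:ℝ) * ε) * (1 + ε) ^ n
            ≤ (1 - (n:ℝ) * ε) * Real.exp ((n:ℝ) * ε) :=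
          mul_le_mul_of_nonneg_left e23 hc0.le
        have s2 : (1 - (n:ℝ) * ε) * Real.exp ((n:ℝ) * ε)
            ≤ Real.exp (-((n:ℝ) * ε)) * Real.exp ((n:ℝ) * ε) :=
          mul_le_mul_of_nonneg_right e4 (Real.exp_pos _).le
        linarith
      rw [hcdef, inv_pow]
      calc 1 - (n:ℝ) * ε = ((1 - (n:ℝ) * ε) * (1 + ε) ^ n) / (1 + ε) ^ n := by
            field_simp
        _ ≤ 1 / (1 + ε) ^ n := by gcongr
        _ = ((1 + ε) ^ n)⁻¹ := one_div _
  -- Step 1 pointwise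
  have hpt1 : ∀ u ∈ Set.Icc a b, Real.exp (-h u) * h u * u ^ (n - 1) ≤
      ε⁻¹ * (Real.exp (-h u) * u ^ (n - 1) - f u)
        + ε * (Real.exp (-h u) * (h u) ^ 2 * u ^ (n - 1)) := by
    intro u hu
    have hx := hhnn u hu
    have hupos : 0 < u := lt_of_lt_of_le ha hu.1
    have hw : (0:ℝ) ≤ u ^ (n - 1) := by positivity
    have hq := aux_exp_quad (ε * h u) (by positivity)
    have hE := Real.exp_pos (-h u)
    have hsplit : Real.exp (-((1 + ε) * h u))
        = Real.exp (-h u) * Real.exp (-(ε * h u)) := by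
      rw [← Real.exp_add]; congr 1; ring
    have hcore : Real.exp (-h u) * h u ≤
        ε⁻¹ * (Real.exp (-h u) - Real.exp (-((1 + ε) * h u)))
          + ε * (Real.exp (-h u) * (h u) ^ 2) := by
      rw [hsplit]
      have h9 : ε * (Real.exp (-h u) * h u) ≤
          (Real.exp (-h u) - Real.exp (-h u) * Real.exp (-(ε * h u)))
            + ε * (ε * (Real.exp (-h u) * (h u) ^ 2)) := by
        nlinarith [mul_le_mul_of_nonneg_left hq hE.le]
      calc Real.exp (-h u) * h u = ε⁻¹ * (ε * (Real.exp (-h u) * h u)) := by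
            field_simp
        _ ≤ ε⁻¹ * ((Real.exp (-h u) - Real.exp (-h u) * Real.exp (-(ε * h u)))
              + ε * (ε * (Real.exp (-h u) * (h u) ^ 2))) :=
            mul_le_mul_of_nonneg_left h9 (by positivity)
        _ = ε⁻¹ * (Real.exp (-h u) - Real.exp (-h u) * Real.exp (-(ε * h u)))
              + ε * (Real.exp (-h u) * (h u) ^ 2) := by
            field_simp
    calc Real.exp (-h u) * h u * u ^ (n - 1)
        ≤ (ε⁻¹ * (Real.exp (-h u) - Real.exp (-((1 + ε) * h u)))
            + ε * (Real.exp (-h u) * (h u) ^ 2)) * u ^ (n - 1) :=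
          mul_le_mul_of_nonneg_right hcore hw
      _ = ε⁻¹ * (Real.exp (-h u) * u ^ (n - 1) - f u)
            + ε * (Real.exp (-h u) * (h u) ^ 2 * u ^ (n - 1)) := by
          simp only [hfdef]; ring
  have step1 : (∫ z in a..b, Real.exp (-h z) * h z * z ^ (n - 1))
      ≤ ε⁻¹ * (I - J) + ε * M := by
    have hint1 : IntervalIntegrable
        (fun u => ε⁻¹ * (Real.exp (-h u) * u ^ (n - 1) - f u)) volume a b :=
      (intB.sub intF).const_mul _
    have hint2 : IntervalIntegrable
        (fun u => ε * (Real.exp (-h u) * (h u) ^ 2 * u ^ (n - 1))) volume a b :=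
      intC.const_mul _
    have hmono := intervalIntegral.integral_mono_on hab' intA (hint1.add hint2) hpt1
    calc (∫ z in a..b, Real.exp (-h z) * h z * z ^ (n - 1))
        ≤ ∫ u in a..b, (ε⁻¹ * (Real.exp (-h u) * u ^ (n - 1) - f u)
            + ε * (Real.exp (-h u) * (h u) ^ 2 * u ^ (n - 1))) := hmono
      _ = ε⁻¹ * (I - J) + ε * M := by
          rw [intervalIntegral.integral_add hint1 hint2,
            intervalIntegral.integral_const_mul, intervalIntegral.integral_const_mul,
            intervalIntegral.integral_sub intB intF]
  have hIJ : I - J ≤ ε * ((n:ℝ) * I) := by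
    have h1 : (1 - (n:ℝ) * ε) * I ≤ c ^ n * I :=
      mul_le_mul_of_nonneg_right hBern hIpos.le
    nlinarith [step2]
  have h2 : ε⁻¹ * (I - J) ≤ (n:ℝ) * I := by
    calc ε⁻¹ * (I - J) ≤ ε⁻¹ * (ε * ((n:ℝ) * I)) :=
          mul_le_mul_of_nonneg_left hIJ (inv_nonneg.mpr hεpos.le)
      _ = (n:ℝ) * I := by field_simp
  have h3 : ε * M ≤ I := by nlinarith [hεM, hεpos]
  calc (∫ z in a..b, Real.exp (-h z) * h z * z ^ (n - 1))
      ≤ ε⁻¹ * (I - J) + ε * M := step1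
    _ ≤ (n:ℝ) * I + I := by linarith
    _ = ((n:ℝ) + 1) * I := by ring
end

section
/- For a convex function f : K → ℝ on a convex set K ⊆ ℝⁿ, define Z(a) = ∫_K e^{-a·f(x)} dx for a > 0. Then Z(a)·Z(b) ≤ Z((a+b)/2)² · ((a+b)²/(4ab))ⁿ for all a, b > 0. -/
/-!
With `U = interior K` and `c = (a + b) / 2`, the densities `φₛ(y) = 𝟙_{sU}(y) e^{-s f(y/s)}`
(`dilatedDensity`) have `∫ φₛ = sⁿ Z(s)`, and convexity of the perspective `(s, y) ↦ s f(y/s)`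
gives `φₐ(x) φ_b(y) ≤ φ_c((x + y)/2)²`. The Prékopa–Leindler inequality turns this into
`aⁿZ(a) · bⁿZ(b) ≤ (cⁿZ(c))²`.

Prékopa–Leindler on `ℝⁿ` follows from the case of the line by integrating fibre by fibre. On the
line, after rescaling `f` and `g` to a common supremum, every superlevel set of `h` contains the
midpoints of the corresponding superlevel sets of `f` and `g`, so the one-dimensional
Brunn–Minkowski inequality `|A| + |B| ≤ |A + B|` and the layer-cake formula give
`∫f + ∫g ≤ 2∫h`, and AM–GM finishes.
-/

open MeasureTheory Real Set Module
open scoped Pointwise ENNReal NNReal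

theorem ENNReal.four_mul_le_sq_add (a b : ℝ≥0∞) : 4 * a * b ≤ (a + b) ^ 2 := by
  rcases eq_or_ne a ∞ with rfl | ha
  · simp
  rcases eq_or_ne b ∞ with rfl | hb
  · simp
  lift a to ℝ≥0 using ha
  lift b to ℝ≥0 using hb
  exact_mod_cast _root_.four_mul_le_sq_add a b

theorem ENNReal.exists_sq_eq (a : ℝ≥0∞) : ∃ c, c ^ 2 = a := by
  rcases eq_or_ne a ∞ with rfl | ha
  · exact ⟨∞, by simp⟩
  · lift a to ℝ≥0 using ha
    exact ⟨NNReal.sqrt a, by rw [← ENNReal.coe_pow, NNReal.sq_sqrt]⟩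

theorem Real.volume_Ioi_inter_ofReal_lt (c : ℝ≥0∞) :
    volume (Ioi (0 : ℝ) ∩ {t | ENNReal.ofReal t < c}) = c := by
  rcases eq_or_ne c ∞ with rfl | hc
  · simp
  · have : Ioi (0 : ℝ) ∩ {t | ENNReal.ofReal t < c} = Ioo 0 c.toReal := by
      ext t
      simp only [mem_inter_iff, mem_Ioi, mem_ofPred_eq, mem_Ioo, and_congr_right_iff]
      exact fun ht => ENNReal.ofReal_lt_iff_lt_toReal ht.le hc
    rw [this, Real.volume_Ioo, sub_zero, ENNReal.ofReal_toReal hc]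

theorem lintegral_eq_lintegral_meas_ofReal_lt {α : Type*} [MeasurableSpace α] (μ : Measure α)
    [SFinite μ] {φ : α → ℝ≥0∞} (hφ : Measurable φ) :
    ∫⁻ x, φ x ∂μ = ∫⁻ t in Ioi 0, μ {x | ENNReal.ofReal t < φ x} := by
  have hS : MeasurableSet {p : α × ℝ | ENNReal.ofReal p.2 < φ p.1} :=
    measurableSet_lt (ENNReal.measurable_ofReal.comp measurable_snd) (hφ.comp measurable_fst)
  calc ∫⁻ x, φ x ∂μ = ∫⁻ x, volume.restrict (Ioi 0) {t | ENNReal.ofReal t < φ x} ∂μ := by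
        simp_rw [Measure.restrict_apply' measurableSet_Ioi, inter_comm _ (Ioi _),
          Real.volume_Ioi_inter_ofReal_lt]
    _ = μ.prod (volume.restrict (Ioi 0)) {p : α × ℝ | ENNReal.ofReal p.2 < φ p.1} :=
        (Measure.prod_apply hS).symm
    _ = ∫⁻ t in Ioi 0, μ {x | ENNReal.ofReal t < φ x} := Measure.prod_apply_symm hS

theorem lintegral_eq_iSup_lintegral_min_natCast {α : Type*} [MeasurableSpace α] {μ : Measure α}
    {φ : α → ℝ≥0∞} (hφ : Measurable φ) : ∫⁻ x, φ x ∂μ = ⨆ k : ℕ, ∫⁻ x, min (φ x) k ∂μ := by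
  rw [← lintegral_iSup (fun k => hφ.min measurable_const)
    fun i j hij x => min_le_min_left _ (by exact_mod_cast hij)]
  congr with x
  rw [← inf_iSup_eq, ENNReal.iSup_natCast, inf_top_eq]

theorem Prod.midpoint_mk {E F : Type*} [AddCommGroup E] [Module ℝ E] [AddCommGroup F]
    [Module ℝ F] (x₁ x₂ : E) (y₁ y₂ : F) :
    midpoint ℝ (x₁, y₁) (x₂, y₂) = (midpoint ℝ x₁ x₂, midpoint ℝ y₁ y₂) := by
  simp [midpoint_eq_smul_add]

section PrekopaLeindler

variable {E F : Type*} [AddCommGroup E] [Module ℝ E] [MeasurableSpace E]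
  [AddCommGroup F] [Module ℝ F] [MeasurableSpace F]

def PrekopaLeindler (μ : Measure E) : Prop :=
  ∀ ⦃f g h : E → ℝ≥0∞⦄, Measurable f → Measurable g → Measurable h →
    (∀ x y, f x * g y ≤ h (midpoint ℝ x y) ^ 2) →
    (∫⁻ x, f x ∂μ) * ∫⁻ x, g x ∂μ ≤ (∫⁻ x, h x ∂μ) ^ 2

theorem prekopaLeindler_dirac (a : E) : PrekopaLeindler (Measure.dirac a) := by
  intro f g h hf hg hh H
  simpa [lintegral_dirac' a hf, lintegral_dirac' a hg, lintegral_dirac' a hh] using H a a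

theorem PrekopaLeindler.of_measurePreserving {μ : Measure E} {ν : Measure F}
    (hμ : PrekopaLeindler μ) {e : E → F} (he : MeasurePreserving e μ ν)
    (hmid : ∀ x y, e (midpoint ℝ x y) = midpoint ℝ (e x) (e y)) : PrekopaLeindler ν := by
  intro f g h hf hg hh H
  rw [← he.lintegral_comp hf, ← he.lintegral_comp hg, ← he.lintegral_comp hh]
  refine hμ (hf.comp he.measurable) (hg.comp he.measurable) (hh.comp he.measurable) fun x y => ?_
  simpa only [Function.comp_apply, hmid] using H (e x) (e y)

theorem PrekopaLeindler.prod {μ : Measure E} {ν : Measure F} [SFinite μ] [SFinite ν]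
    (hμ : PrekopaLeindler μ) (hν : PrekopaLeindler ν) : PrekopaLeindler (μ.prod ν) := by
  intro f g h hf hg hh H
  rw [lintegral_prod_symm _ hf.aemeasurable, lintegral_prod_symm _ hg.aemeasurable,
    lintegral_prod_symm _ hh.aemeasurable]
  refine hν hf.lintegral_prod_left' hg.lintegral_prod_left' hh.lintegral_prod_left'
    fun y₁ y₂ => hμ (hf.comp measurable_prodMk_right) (hg.comp measurable_prodMk_right)
      (hh.comp measurable_prodMk_right) fun x₁ x₂ => ?_
  simpa only [Prod.midpoint_mk] using H (x₁, y₁) (x₂, y₂)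

end PrekopaLeindler

namespace Real

theorem volume_add_singleton (A : Set ℝ) (b : ℝ) : volume (A + {b}) = volume A := by
  rw [add_singleton, image_add_right, measure_preimage_add_right]

theorem volume_singleton_add (a : ℝ) (B : Set ℝ) : volume ({a} + B) = volume B := by
  rw [singleton_add, image_add_left, measure_preimage_add]

theorem volume_le_volume_add_left {A : Set ℝ} (B : Set ℝ) (hA : A.Nonempty) :
    volume B ≤ volume (A + B) := by
  obtain ⟨a, ha⟩ := hA
  rw [← volume_singleton_add a B]
  exact measure_mono (add_subset_add_right (singleton_subset_iff.2 ha))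

theorem volume_le_volume_add_right (A : Set ℝ) {B : Set ℝ} (hB : B.Nonempty) :
    volume A ≤ volume (A + B) := by
  rw [add_comm]; exact volume_le_volume_add_left A hB

/-- One-dimensional Brunn–Minkowski for compact sets: translating `A` to end at `max A + min B`
and `B` to start there gives two copies inside `A + B` meeting in a single point. -/
theorem volume_add_volume_le_volume_add_of_isCompact {A B : Set ℝ} (hA : A.Nonempty)
    (hB : B.Nonempty) (hAc : IsCompact A) (hBc : IsCompact B) :
    volume A + volume B ≤ volume (A + B) := by
  set a := sSup A
  set b := sInf B
  have haA : a ∈ A := hAc.sSup_mem hA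
  have hbB : b ∈ B := hBc.sInf_mem hB
  have hAb : A + {b} ⊆ A + B := add_subset_add_left (singleton_subset_iff.2 hbB)
  have haB : {a} + B ⊆ A + B := add_subset_add_right (singleton_subset_iff.2 haA)
  have hinter : (A + {b}) ∩ ({a} + B) ⊆ {a + b} := by
    rintro z ⟨⟨x, hx, b', hb', rfl⟩, ⟨a', ha', y, hy, hz⟩⟩
    rw [mem_singleton_iff] at hb' ha'
    subst hb' ha'
    have hxa : x ≤ a := le_csSup hAc.bddAbove hx
    have hby : b ≤ y := csInf_le hBc.bddBelow hy
    rw [mem_singleton_iff]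
    linarith
  calc volume A + volume B = volume (A + {b}) + volume ({a} + B) := by
        rw [volume_add_singleton, volume_singleton_add]
    _ = volume ((A + {b}) ∪ ({a} + B)) + volume ((A + {b}) ∩ ({a} + B)) :=
        (measure_union_add_inter _ (isCompact_singleton.add hBc |>.measurableSet)).symm
    _ = volume ((A + {b}) ∪ ({a} + B)) := by
        rw [measure_mono_null hinter (measure_singleton _), add_zero]
    _ ≤ volume (A + B) := measure_mono (union_subset hAb haB)

theorem volume_add_volume_le_volume_add {A B : Set ℝ} (hA : A.Nonempty) (hB : B.Nonempty)
    (hAm : MeasurableSet A) (hBm : MeasurableSet B) :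
    volume A + volume B ≤ volume (A + B) := by
  rcases eq_or_ne (volume A) 0 with hA0 | hA0
  · rw [hA0, zero_add]; exact volume_le_volume_add_left B hA
  rcases eq_or_ne (volume B) 0 with hB0 | hB0
  · rw [hB0, add_zero]; exact volume_le_volume_add_right A hB
  refine le_of_forall_lt fun r hr => ?_
  obtain ⟨r₁, hr₁, r₂, hr₂, hr⟩ := ENNReal.exists_lt_add_of_lt_add hr hA0 hB0
  obtain ⟨K, hKA, hK, hr₁K⟩ := hAm.exists_lt_isCompact hr₁
  obtain ⟨L, hLB, hL, hr₂L⟩ := hBm.exists_lt_isCompact hr₂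
  have hKne : K.Nonempty := nonempty_of_measure_ne_zero (pos_of_gt hr₁K).ne'
  have hLne : L.Nonempty := nonempty_of_measure_ne_zero (pos_of_gt hr₂L).ne'
  calc r < volume K + volume L := hr.trans (ENNReal.add_lt_add hr₁K hr₂L)
    _ ≤ volume (K + L) := volume_add_volume_le_volume_add_of_isCompact hKne hLne hK hL
    _ ≤ volume (A + B) := measure_mono (add_subset_add hKA hLB)

theorem volume_add_volume_le_two_mul_volume {A B C : Set ℝ} (hA : A.Nonempty)
    (hB : B.Nonempty) (hAm : MeasurableSet A) (hBm : MeasurableSet B)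
    (hC : ∀ x ∈ A, ∀ y ∈ B, midpoint ℝ x y ∈ C) :
    volume A + volume B ≤ 2 * volume C := by
  have hsub : A + B ⊆ (2 : ℝ) • C := by
    rintro _ ⟨x, hx, y, hy, rfl⟩
    exact ⟨midpoint ℝ x y, hC x hx y hy, by simp only [two_smul, midpoint_add_self]⟩
  calc volume A + volume B ≤ volume (A + B) := volume_add_volume_le_volume_add hA hB hAm hBm
    _ ≤ volume ((2 : ℝ) • C) := measure_mono hsub
    _ = 2 * volume C := by simp [Measure.addHaar_smul]

theorem lintegral_add_lintegral_le_two_mul_lintegral {f g h : ℝ → ℝ≥0∞} (hf : Measurable f)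
    (hg : Measurable g) (hh : Measurable h) (hsup : ⨆ x, f x = ⨆ x, g x)
    (H : ∀ x y, min (f x) (g y) ≤ h (midpoint ℝ x y)) :
    (∫⁻ x, f x) + ∫⁻ x, g x ≤ 2 * ∫⁻ x, h x := by
  have hlevel : ∀ t : ℝ, volume {x | ENNReal.ofReal t < f x} + volume {x | ENNReal.ofReal t < g x}
      ≤ 2 * volume {z | ENNReal.ofReal t < h z} := by
    intro t
    by_cases ht : ENNReal.ofReal t < ⨆ x, f x
    · have ht' : ENNReal.ofReal t < ⨆ x, g x := hsup ▸ ht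
      refine volume_add_volume_le_two_mul_volume (lt_iSup_iff.1 ht) (lt_iSup_iff.1 ht')
        (measurableSet_lt measurable_const hf) (measurableSet_lt measurable_const hg) ?_
      exact fun x hx y hy => (lt_min hx hy).trans_le (H x y)
    · rw [hsup] at ht
      have hA : {x | ENNReal.ofReal t < f x} = ∅ :=
        not_nonempty_iff_eq_empty.1 fun hne => ht (hsup ▸ lt_iSup_iff.2 hne)
      have hB : {x | ENNReal.ofReal t < g x} = ∅ :=
        not_nonempty_iff_eq_empty.1 fun hne => ht (lt_iSup_iff.2 hne)
      simp [hA, hB]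
  have hmeas : ∀ φ : ℝ → ℝ≥0∞, Measurable fun t : ℝ => volume {x | ENNReal.ofReal t < φ x} :=
    fun φ => Antitone.measurable fun s t hst =>
      measure_mono fun x hx => (ENNReal.ofReal_le_ofReal hst).trans_lt hx
  rw [lintegral_eq_lintegral_meas_ofReal_lt volume hf,
    lintegral_eq_lintegral_meas_ofReal_lt volume hg, ← lintegral_add_left (hmeas f),
    lintegral_eq_lintegral_meas_ofReal_lt volume hh,
    ← lintegral_const_mul' _ _ ENNReal.ofNat_ne_top]
  exact setLIntegral_mono' measurableSet_Ioi fun t _ => hlevel t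

theorem lintegral_mul_lintegral_le_sq_of_iSup_ne_top {f g h : ℝ → ℝ≥0∞}
    (hf : Measurable f) (hg : Measurable g) (hh : Measurable h) (hfS : ⨆ x, f x ≠ ∞)
    (hgS : ⨆ x, g x ≠ ∞) (H : ∀ x y, f x * g y ≤ h (midpoint ℝ x y) ^ 2) :
    (∫⁻ x, f x) * ∫⁻ x, g x ≤ (∫⁻ x, h x) ^ 2 := by
  set Sf := ⨆ x, f x
  set Sg := ⨆ x, g x
  rcases eq_or_ne Sf 0 with hf0 | hf0
  · simp [ENNReal.iSup_eq_zero.1 hf0]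
  rcases eq_or_ne Sg 0 with hg0 | hg0
  · simp [ENNReal.iSup_eq_zero.1 hg0]
  obtain ⟨c, hc⟩ := ENNReal.exists_sq_eq (Sf * Sg)
  -- rescaling `f` by `Sg` and `g` by `Sf` equalizes the suprema
  have hadd : Sg * (∫⁻ x, f x) + Sf * ∫⁻ x, g x ≤ 2 * (c * ∫⁻ x, h x) := by
    rw [← lintegral_const_mul _ hf, ← lintegral_const_mul _ hg, ← lintegral_const_mul _ hh]
    refine lintegral_add_lintegral_le_two_mul_lintegral (hf.const_mul _) (hg.const_mul _)
      (hh.const_mul _) (by rw [← ENNReal.mul_iSup, ← ENNReal.mul_iSup, mul_comm]) fun x y => ?_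
    rw [← ENNReal.pow_le_pow_left_iff two_ne_zero]
    calc min (Sg * f x) (Sf * g y) ^ 2 ≤ Sg * f x * (Sf * g y) := by
          rw [sq]; exact mul_le_mul' (min_le_left _ _) (min_le_right _ _)
      _ = c ^ 2 * (f x * g y) := by rw [hc]; ring
      _ ≤ c ^ 2 * h (midpoint ℝ x y) ^ 2 := by gcongr; exact H x y
      _ = (c * h (midpoint ℝ x y)) ^ 2 := by ring
  have hscaled :
      (4 * (Sf * Sg)) * ((∫⁻ x, f x) * ∫⁻ x, g x) ≤ (4 * (Sf * Sg)) * (∫⁻ x, h x) ^ 2 :=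
    calc (4 * (Sf * Sg)) * ((∫⁻ x, f x) * ∫⁻ x, g x)
        = 4 * (Sg * ∫⁻ x, f x) * (Sf * ∫⁻ x, g x) := by ring
      _ ≤ (Sg * (∫⁻ x, f x) + Sf * ∫⁻ x, g x) ^ 2 := ENNReal.four_mul_le_sq_add _ _
      _ ≤ (2 * (c * ∫⁻ x, h x)) ^ 2 := by gcongr
      _ = (4 * (Sf * Sg)) * (∫⁻ x, h x) ^ 2 := by rw [← hc]; ring
  refine (ENNReal.mul_le_mul_iff_right ?_ ?_).1 hscaled
  · simp [hf0, hg0]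
  · exact ENNReal.mul_ne_top ENNReal.ofNat_ne_top (ENNReal.mul_ne_top hfS hgS)

theorem lintegral_mul_lintegral_le_sq {f g h : ℝ → ℝ≥0∞} (hf : Measurable f)
    (hg : Measurable g) (hh : Measurable h) (H : ∀ x y, f x * g y ≤ h (midpoint ℝ x y) ^ 2) :
    (∫⁻ x, f x) * ∫⁻ x, g x ≤ (∫⁻ x, h x) ^ 2 := by
  have htrunc : ∀ k : ℕ, (∫⁻ x, min (f x) k) * ∫⁻ x, min (g x) k ≤ (∫⁻ x, h x) ^ 2 := by
    intro k
    refine lintegral_mul_lintegral_le_sq_of_iSup_ne_top (hf.min measurable_const)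
      (hg.min measurable_const) hh ?_ ?_ fun x y => ?_
    · exact ne_top_of_le_ne_top (ENNReal.natCast_ne_top k) (iSup_le fun x => min_le_right _ _)
    · exact ne_top_of_le_ne_top (ENNReal.natCast_ne_top k) (iSup_le fun x => min_le_right _ _)
    · exact (mul_le_mul' (min_le_left _ _) (min_le_left _ _)).trans (H x y)
  rw [lintegral_eq_iSup_lintegral_min_natCast hf, lintegral_eq_iSup_lintegral_min_natCast hg,
    ENNReal.iSup_mul]
  refine iSup_le fun i => ?_
  rw [ENNReal.mul_iSup]
  refine iSup_le fun j => le_trans ?_ (htrunc (max i j))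
  gcongr <;> exact_mod_cast (by omega : _ ≤ max i j)

theorem prekopaLeindler_volume : PrekopaLeindler (volume : Measure ℝ) :=
  fun _ _ _ => lintegral_mul_lintegral_le_sq

end Real

theorem prekopaLeindler_volume_pi : ∀ n : ℕ, PrekopaLeindler (volume : Measure (Fin n → ℝ))
  | 0 => by
    rw [volume_pi, Measure.pi_of_empty]
    exact prekopaLeindler_dirac _
  | n + 1 => by
    refine (Real.prekopaLeindler_volume.prod (prekopaLeindler_volume_pi n)).of_measurePreserving
      (volume_preserving_piFinSuccAbove (fun _ => ℝ) 0).symm fun p q => ?_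
    ext i
    refine Fin.cases ?_ (fun j => ?_) i <;>
      simp [MeasurableEquiv.piFinSuccAbove_symm_apply, midpoint_eq_smul_add, mul_add]

theorem EuclideanSpace.prekopaLeindler_volume (n : ℕ) :
    PrekopaLeindler (volume : Measure (EuclideanSpace ℝ (Fin n))) :=
  (prekopaLeindler_volume_pi n).of_measurePreserving (PiLp.volume_preserving_toLp (Fin n))
    fun x y => by simp [midpoint_eq_smul_add]

theorem MeasureTheory.Measure.lintegral_comp_inv_smul_of_pos {E : Type*} [NormedAddCommGroup E]
    [NormedSpace ℝ E] [MeasurableSpace E] [BorelSpace E] [FiniteDimensional ℝ E]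
    (μ : Measure E) [μ.IsAddHaarMeasure] (g : E → ℝ≥0∞) {r : ℝ} (hr : 0 < r) :
    ∫⁻ x, g (r⁻¹ • x) ∂μ = ENNReal.ofReal (r ^ finrank ℝ E) * ∫⁻ x, g x ∂μ := by
  have hmap := Measure.map_addHaar_smul μ (inv_ne_zero hr.ne')
  rw [inv_pow, inv_inv, abs_of_pos (by positivity)] at hmap
  rw [← smul_eq_mul, ← lintegral_smul_measure, ← hmap]
  exact (lintegral_map_equiv g (MeasurableEquiv.smul₀ r⁻¹ (inv_ne_zero hr.ne'))).symm

section DilatedDensity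

variable {E : Type*} [NormedAddCommGroup E] [NormedSpace ℝ E]

noncomputable def dilatedDensity (U : Set E) (f : E → ℝ) (s : ℝ) (y : E) : ℝ≥0∞ :=
  U.indicator (fun x => ENNReal.ofReal (exp (-s * f x))) (s⁻¹ • y)

theorem ConvexOn.dilatedDensity_mul_le {U : Set E} {f : E → ℝ} (hf : ConvexOn ℝ U f) {a b : ℝ}
    (ha : 0 < a) (hb : 0 < b) (x y : E) :
    dilatedDensity U f a x * dilatedDensity U f b y
      ≤ dilatedDensity U f ((a + b) / 2) (midpoint ℝ x y) ^ 2 := by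
  by_cases hx : a⁻¹ • x ∈ U
  swap; · simp [dilatedDensity, indicator_of_notMem hx]
  by_cases hy : b⁻¹ • y ∈ U
  swap; · simp [dilatedDensity, indicator_of_notMem hy]
  have hab : 0 < a + b := add_pos ha hb
  have hθ : a / (a + b) + b / (a + b) = 1 := by field_simp
  obtain ⟨w, hw⟩ : ∃ w, ((a + b) / 2)⁻¹ • midpoint ℝ x y = w := ⟨_, rfl⟩
  have hw_comb : (a / (a + b)) • a⁻¹ • x + (b / (a + b)) • b⁻¹ • y = w := by
    rw [← hw, midpoint_eq_smul_add, invOf_eq_inv, smul_smul, smul_smul, smul_smul, smul_add]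
    congr 2 <;> field_simp
  have hwU : w ∈ U := hw_comb ▸ hf.1 hx hy (by positivity) (by positivity) hθ
  have hfw : (a + b) * f w ≤ a * f (a⁻¹ • x) + b * f (b⁻¹ • y) := by
    have hconv := hw_comb ▸ hf.2 hx hy (by positivity) (by positivity) hθ
    calc (a + b) * f w
        ≤ (a + b) * ((a / (a + b)) * f (a⁻¹ • x) + (b / (a + b)) * f (b⁻¹ • y)) := by
          gcongr; exact hconv
      _ = a * f (a⁻¹ • x) + b * f (b⁻¹ • y) := by field_simp
  simp only [dilatedDensity, hw, indicator_of_mem hx, indicator_of_mem hy, indicator_of_mem hwU,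
    ← ENNReal.ofReal_mul (exp_pos _).le, ← ENNReal.ofReal_pow (exp_pos _).le, ← exp_add,
    ← exp_nat_mul]
  refine ENNReal.ofReal_le_ofReal (exp_le_exp.2 ?_)
  push_cast
  linarith

variable [MeasurableSpace E] [BorelSpace E]

theorem measurable_dilatedDensity {U : Set E} (hU : IsOpen U) {f : E → ℝ} (hf : ContinuousOn f U)
    (s : ℝ) : Measurable (dilatedDensity U f s) := by
  classical
  have hcont : ContinuousOn (fun x => ENNReal.ofReal (exp (-s * f x))) U :=
    ENNReal.continuous_ofReal.comp_continuousOn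
      (continuous_exp.comp_continuousOn (continuousOn_const.mul hf))
  have hind := hcont.measurable_piecewise (continuousOn_const (c := 0)) hU.measurableSet
  rw [show (fun _ : E => (0 : ℝ≥0∞)) = 0 from rfl, piecewise_eq_indicator] at hind
  exact hind.comp (measurable_const_smul _)

theorem lintegral_dilatedDensity [FiniteDimensional ℝ E] (μ : Measure E) [μ.IsAddHaarMeasure]
    {U : Set E} (hU : MeasurableSet U) (f : E → ℝ) {s : ℝ} (hs : 0 < s) :
    ∫⁻ y, dilatedDensity U f s y ∂μ
      = ENNReal.ofReal (s ^ finrank ℝ E) * ∫⁻ x in U, ENNReal.ofReal (exp (-s * f x)) ∂μ := by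
  rw [← lintegral_indicator hU]
  exact μ.lintegral_comp_inv_smul_of_pos _ hs

theorem Convex.setIntegral_eq_toReal_setLIntegral_interior [FiniteDimensional ℝ E]
    (μ : Measure E) [μ.IsAddHaarMeasure] {K : Set E} (hK : Convex ℝ K) {g : E → ℝ}
    (hg₀ : ∀ x, 0 ≤ g x) (hg : ContinuousOn g (interior K)) :
    ∫ x in K, g x ∂μ = (∫⁻ x in interior K, ENNReal.ofReal (g x) ∂μ).toReal := by
  rw [← setIntegral_congr_set (interior_ae_eq_of_null_frontier (hK.addHaar_frontier μ)),
    integral_eq_lintegral_of_nonneg_ae (ae_of_all _ hg₀)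
      (hg.aestronglyMeasurable isOpen_interior.measurableSet)]

end DilatedDensity

theorem lintegral_exp_neg_midpoint_mul_le {α : Type*} [MeasurableSpace α] (μ : Measure α)
    {f : α → ℝ} (hf : AEMeasurable f μ) (a b : ℝ) :
    ∫⁻ x, ENNReal.ofReal (exp (-((a + b) / 2) * f x)) ∂μ
      ≤ ∫⁻ x, ENNReal.ofReal (exp (-a * f x)) ∂μ + ∫⁻ x, ENNReal.ofReal (exp (-b * f x)) ∂μ := by
  have hfa : AEMeasurable (fun x => ENNReal.ofReal (exp (-a * f x))) μ := by fun_prop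
  rw [← lintegral_add_left' hfa]
  refine lintegral_mono fun x => ?_
  rw [← ENNReal.ofReal_add (exp_pos _).le (exp_pos _).le]
  refine ENNReal.ofReal_le_ofReal ?_
  rcases le_total (a * f x) (b * f x) with h | h
  · exact (exp_le_exp.2 (by linarith)).trans (le_add_of_nonneg_right (exp_pos _).le)
  · exact (exp_le_exp.2 (by linarith)).trans (le_add_of_nonneg_left (exp_pos _).le)

/-- Since `toReal ∞ = 0`, `hLc` is what excludes `Lc = ∞` with `La` and `Lb` finite. -/
theorem ENNReal.toReal_mul_toReal_le_sq_mul {a b : ℝ} (ha : 0 < a) (hb : 0 < b) (n : ℕ)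
    {La Lb Lc : ℝ≥0∞}
    (hPL : ENNReal.ofReal (a ^ n) * La * (ENNReal.ofReal (b ^ n) * Lb)
      ≤ (ENNReal.ofReal (((a + b) / 2) ^ n) * Lc) ^ 2)
    (hLc : Lc ≤ La + Lb) :
    La.toReal * Lb.toReal ≤ Lc.toReal ^ 2 * ((a + b) ^ 2 / (4 * a * b)) ^ n := by
  rcases eq_or_ne Lc ∞ with rfl | hLc_top
  · rcases ENNReal.add_eq_top.1 (top_le_iff.1 hLc) with h | h <;> simp [h]
  have hreal := ENNReal.toReal_mono (by finiteness) hPL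
  simp only [toReal_mul, toReal_pow, toReal_ofReal (by positivity : (0 : ℝ) ≤ a ^ n),
    toReal_ofReal (by positivity : (0 : ℝ) ≤ b ^ n),
    toReal_ofReal (by positivity : (0 : ℝ) ≤ ((a + b) / 2) ^ n)] at hreal
  have hratio : (a + b) ^ 2 / (4 * a * b) = ((a + b) / 2) ^ 2 / (a * b) := by
    field_simp; ring
  rw [hratio, div_pow, ← mul_div_assoc, le_div_iff₀ (by positivity)]
  calc La.toReal * Lb.toReal * (a * b) ^ n = a ^ n * La.toReal * (b ^ n * Lb.toReal) := by ring
    _ ≤ (((a + b) / 2) ^ n * Lc.toReal) ^ 2 := hreal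
    _ = Lc.toReal ^ 2 * (((a + b) / 2) ^ 2) ^ n := by
        rw [mul_pow, ← pow_mul, ← pow_mul, mul_comm n]; ring

theorem stmt_2_general (n : ℕ) (K : Set (EuclideanSpace ℝ (Fin n)))
    (hKconv : Convex ℝ K)
    (f : EuclideanSpace ℝ (Fin n) → ℝ) (hf : ConvexOn ℝ K f)
    (Z : ℝ → ℝ) (hZ : ∀ a : ℝ, Z a = ∫ x in K, Real.exp (-a * f x))
    (a b : ℝ) (ha : 0 < a) (hb : 0 < b) :
    Z a * Z b ≤ Z ((a + b) / 2) ^ 2 * ((a + b) ^ 2 / (4 * a * b)) ^ n := by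
  have hfU : ConvexOn ℝ (interior K) f := hf.subset interior_subset hKconv.interior
  have hfc : ContinuousOn f (interior K) := hf.continuousOn_interior
  have hZL : ∀ s, Z s = (∫⁻ x in interior K, ENNReal.ofReal (exp (-s * f x))).toReal := by
    intro s
    rw [hZ]
    exact hKconv.setIntegral_eq_toReal_setLIntegral_interior volume (fun x => (exp_pos _).le)
      (continuous_exp.comp_continuousOn (continuousOn_const.mul hfc))
  have hmeas := measurable_dilatedDensity isOpen_interior hfc
  have hPL := EuclideanSpace.prekopaLeindler_volume n (hmeas a) (hmeas b) (hmeas ((a + b) / 2))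
    (hfU.dilatedDensity_mul_le ha hb)
  rw [lintegral_dilatedDensity volume isOpen_interior.measurableSet f ha,
    lintegral_dilatedDensity volume isOpen_interior.measurableSet f hb,
    lintegral_dilatedDensity volume isOpen_interior.measurableSet f (by positivity),
    finrank_euclideanSpace_fin] at hPL
  rw [hZL, hZL, hZL]
  exact ENNReal.toReal_mul_toReal_le_sq_mul ha hb n hPL
    (lintegral_exp_neg_midpoint_mul_le _ (hfc.aemeasurable isOpen_interior.measurableSet) a b)

/-- For a convex function `f` on a convex body `K ⊆ ℝⁿ` and `Z(a) = ∫_K e^{-a f}`,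
one has `Z(a)·Z(b) ≤ Z((a+b)/2)² · ((a+b)²/(4ab))ⁿ`. -/
theorem stmt_2 (n : ℕ) (K : Set (EuclideanSpace ℝ (Fin n)))
    (hKconv : Convex ℝ K) (hKcomp : IsCompact K) (hKint : (interior K).Nonempty)
    (f : EuclideanSpace ℝ (Fin n) → ℝ) (hf : ConvexOn ℝ K f)
    (Z : ℝ → ℝ) (hZ : ∀ a : ℝ, Z a = ∫ x in K, Real.exp (-a * f x))
    (a b : ℝ) (ha : 0 < a) (hb : 0 < b) :
    Z a * Z b ≤ Z ((a + b) / 2) ^ 2 * ((a + b) ^ 2 / (4 * a * b)) ^ n :=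
  stmt_2_general n K hKconv f hf Z hZ a b ha hb
end

section
/- Let J₁, J₂, J₃ be a measurable partition of an interval [a,b] ⊂ ℝ with dist(J₁, J₃) ≥ ε, and let μ be the measure e^{αt} dt on [a,b] for some real α. Then (m/(ε·log 2))·μ([a,b])·μ(J₂) ≥ μ(J₁)·μ(J₃), where m = (1/μ([a,b]))·∫_a^b |t - u| dμ(t) for any fixed u ∈ [a,b]. -/
open MeasureTheory Real Set

/-!
Reflecting `t ↦ -t` we may assume `α ≥ 0`, so that the density `e^{αt}` is nondecreasing, and by
symmetry that `sup J₁ ≤ sup J₃`. Then the open interval of length `ε` just right of `c = sup J₁`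
lies in `J₂`. Choosing `x ≤ c` with `μ[a,x] = μ(J₁)`, monotonicity of the density gives
`μ[x,x+ε] ≤ μ(J₂)` and `μ(J₃) ≤ μ[x+ε,b]`, which reduces the claim to the three intervals
`[a,x]`, `[x,x+ε]`, `[x+ε,b]`.

For these, `μ[x,x+ε] ≥ ε e^{αx}`, and `∫ |t - u| dμ` is smallest at the median `z` of `μ`. For
`α > 0`, with `A = e^{αa}`, `B = e^{αb}`, `X = e^{αx}`, its value there is
`(A log A + B log B - (A+B) log((A+B)/2)) / α²`; one has `(X - A)(B - X) ≤ X (√B - √A)²`, and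
`A log A + B log B - (A+B) log((A+B)/2) ≥ log 2 · (√B - √A)²` becomes, after scaling, a
one-variable inequality that holds because the function vanishes at both ends of `[0,1]` and has a
convex derivative vanishing at `1`. For `α = 0` everything is elementary.
-/

lemma nonneg_of_convexOn_deriv {f f' : ℝ → ℝ} {a b : ℝ} (hf : ContinuousOn f (Icc a b))
    (hf' : ∀ x ∈ Ioo a b, HasDerivAt f (f' x) x) (hconv : ConvexOn ℝ (Icc a b) f')
    (ha : f a = 0) (hb : f b = 0) (hb' : f' b = 0) {x : ℝ} (hx : x ∈ Icc a b) : 0 ≤ f x := by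
  by_contra! hneg
  obtain ⟨w, hw, hmin⟩ := isCompact_Icc.exists_isMinOn ⟨x, hx⟩ hf
  have hfw : f w < 0 := (hmin hx).trans_lt hneg
  have hwa : a < w := hw.1.lt_of_ne (by rintro rfl; linarith)
  have hwb : w < b := hw.2.lt_of_ne (by rintro rfl; linarith)
  have hf'w : f' w = 0 :=
    (hmin.isLocalMin (Icc_mem_nhds hwa hwb)).hasDerivAt_eq_zero (hf' w ⟨hwa, hwb⟩)
  have hanti : AntitoneOn f (Icc w b) := by
    refine antitoneOn_of_hasDerivWithinAt_nonpos (f' := f') (convex_Icc w b)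
      (hf.mono (Icc_subset_Icc_left hw.1)) (fun y hy => ?_) (fun y hy => ?_)
    · rw [interior_Icc] at hy
      exact (hf' y ⟨hwa.trans hy.1, hy.2⟩).hasDerivWithinAt
    · rw [interior_Icc] at hy
      have := hconv.le_on_segment hw (right_mem_Icc.2 (hwa.trans hwb).le)
        (by rw [segment_eq_Icc hwb.le]; exact Ioo_subset_Icc_self hy)
      simpa [hf'w, hb'] using this
  linarith [hanti (left_mem_Icc.2 hwb.le) (right_mem_Icc.2 hwb.le) hwb.le]

lemma hasDerivAt_log_one_add_sq_div_two (t : ℝ) :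
    HasDerivAt (fun x => log ((1 + x ^ 2) / 2)) (2 * t / (1 + t ^ 2)) t := by
  have h := (((hasDerivAt_pow 2 t).const_add 1).div_const 2).log (by positivity)
  convert h using 1
  field_simp
  ring

lemma convexOn_mul_log_sub_mul_log_one_add_sq_div_two :
    ConvexOn ℝ (Icc 0 1)
      (fun t => 4 * (t * log t) - 2 * t * log ((1 + t ^ 2) / 2) + 2 * log 2 * (1 - t)) := by
  have hc : Continuous fun t : ℝ => log ((1 + t ^ 2) / 2) :=
    Continuous.log (by fun_prop) fun t => by positivity
  refine convexOn_of_hasDerivWithinAt2_nonneg (convex_Icc 0 1)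
    (by have := continuous_mul_log; fun_prop) (f' := fun t =>
      4 * log t + 4 - 2 * log ((1 + t ^ 2) / 2) - 4 * t ^ 2 / (1 + t ^ 2) - 2 * log 2)
    (f'' := fun t => 4 * (1 - t ^ 2) / (t * (1 + t ^ 2) ^ 2)) ?_ ?_ ?_ <;>
    intro t ht <;> rw [interior_Icc] at ht <;> obtain ⟨ht0, ht1⟩ := ht
  · refine HasDerivAt.hasDerivWithinAt ?_
    have h := (((hasDerivAt_mul_log ht0.ne').const_mul 4).sub
      (((hasDerivAt_id' t).const_mul 2).mul (hasDerivAt_log_one_add_sq_div_two t))).add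
      (((hasDerivAt_id' t).const_sub 1).const_mul (2 * log 2))
    refine h.congr_deriv ?_
    field_simp
    ring
  · refine HasDerivAt.hasDerivWithinAt ?_
    have h := ((((((hasDerivAt_log ht0.ne').const_mul 4).add_const 4).sub
      ((hasDerivAt_log_one_add_sq_div_two t).const_mul 2)).sub
      (((hasDerivAt_pow 2 t).const_mul 4).div ((hasDerivAt_pow 2 t).const_add 1)
        (by positivity))).sub_const (2 * log 2))
    refine h.congr_deriv ?_
    norm_num
    field_simp
    ring
  · have : t ^ 2 ≤ 1 := by nlinarith
    have : 0 ≤ 1 - t ^ 2 := by linarith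
    positivity

lemma log_two_mul_one_sub_sq_le {t : ℝ} (ht0 : 0 ≤ t) (ht1 : t ≤ 1) :
    log 2 * (1 - t) ^ 2 ≤ 2 * t * (t * log t) - (1 + t ^ 2) * log ((1 + t ^ 2) / 2) := by
  have hc : Continuous fun t : ℝ => log ((1 + t ^ 2) / 2) :=
    Continuous.log (by fun_prop) fun t => by positivity
  refine sub_nonneg.1 (nonneg_of_convexOn_deriv (a := 0) (b := 1)
    (f := fun t => 2 * t * (t * log t) - (1 + t ^ 2) * log ((1 + t ^ 2) / 2) - log 2 * (1 - t) ^ 2)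
    (by have := continuous_mul_log; fun_prop) (fun t ht => ?_)
    convexOn_mul_log_sub_mul_log_one_add_sq_div_two (by simp [← log_inv])
    (by simp) (by simp) ⟨ht0, ht1⟩)
  have h := ((((hasDerivAt_id' t).const_mul 2).mul (hasDerivAt_mul_log ht.1.ne')).sub
    (((hasDerivAt_pow 2 t).const_add 1).mul (hasDerivAt_log_one_add_sq_div_two t))).sub
    ((((hasDerivAt_id' t).const_sub 1).pow 2).const_mul (log 2))
  refine h.congr_deriv ?_
  norm_num
  field_simp
  ring

noncomputable def mulLogGap (A B : ℝ) : ℝ := A * log A + B * log B - (A + B) * log ((A + B) / 2)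

lemma log_two_mul_sqrt_sub_sqrt_sq_le_mulLogGap {A B : ℝ} (hA : 0 < A) (hAB : A ≤ B) :
    log 2 * (√B - √A) ^ 2 ≤ mulLogGap A B := by
  obtain ⟨p, hp, rfl⟩ : ∃ p, 0 < p ∧ p ^ 2 = A := ⟨√A, sqrt_pos.2 hA, sq_sqrt hA.le⟩
  obtain ⟨q, hq, rfl⟩ : ∃ q, 0 < q ∧ q ^ 2 = B :=
    ⟨√B, sqrt_pos.2 (hA.trans_le hAB), sq_sqrt (hA.trans_le hAB).le⟩
  have hpq : p ≤ q := (pow_le_pow_iff_left₀ hp.le hq.le two_ne_zero).1 hAB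
  obtain ⟨t, ht0, ht1, rfl⟩ : ∃ t, 0 < t ∧ t ≤ 1 ∧ t * q = p :=
    ⟨p / q, div_pos hp hq, (div_le_one hq).2 hpq, div_mul_cancel₀ p hq.ne'⟩
  have key := log_two_mul_one_sub_sq_le ht0.le ht1
  have hsum : ((t * q) ^ 2 + q ^ 2) / 2 = (1 + t ^ 2) / 2 * q ^ 2 := by ring
  rw [sqrt_sq hq.le, sqrt_sq (by positivity), mulLogGap, hsum, mul_pow,
    log_mul (by positivity) (by positivity), log_mul (by positivity) (by positivity), log_pow]
  push_cast
  nlinarith [mul_le_mul_of_nonneg_left key (sq_nonneg q)]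

lemma integral_abs_sub_mul_eq {g : ℝ → ℝ} (hg : Continuous g) {a z b : ℝ} (haz : a ≤ z)
    (hzb : z ≤ b) :
    ∫ t in a..b, |t - z| * g t = (∫ t in a..z, (z - t) * g t) + ∫ t in z..b, (t - z) * g t := by
  rw [← intervalIntegral.integral_add_adjacent_intervals (b := z)
    (by apply Continuous.intervalIntegrable; fun_prop)
    (by apply Continuous.intervalIntegrable; fun_prop)]
  congr 1
  · refine intervalIntegral.integral_congr fun t ht => ?_
    rw [uIcc_of_le haz] at ht
    rw [abs_of_nonpos (by linarith [ht.2]), neg_sub]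
  · refine intervalIntegral.integral_congr fun t ht => ?_
    rw [uIcc_of_le hzb] at ht
    rw [abs_of_nonneg (by linarith [ht.1])]

lemma integral_abs_sub_mul_le_of_median {g : ℝ → ℝ} (hg : Continuous g) (hg0 : ∀ t, 0 ≤ g t)
    {a z b : ℝ} (haz : a ≤ z) (hzb : z ≤ b) (hmed : ∫ t in a..z, g t = ∫ t in z..b, g t)
    (u : ℝ) : ∫ t in a..b, |t - z| * g t ≤ ∫ t in a..b, |t - u| * g t := by
  have hleft : (∫ t in a..z, (z - t) * g t) + (u - z) * ∫ t in a..z, g t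
      ≤ ∫ t in a..z, |t - u| * g t := by
    rw [← intervalIntegral.integral_const_mul, ← intervalIntegral.integral_add
      (by apply Continuous.intervalIntegrable; fun_prop)
      (by apply Continuous.intervalIntegrable; fun_prop)]
    refine intervalIntegral.integral_mono_on haz
      (by apply Continuous.intervalIntegrable; fun_prop)
      (by apply Continuous.intervalIntegrable; fun_prop) fun t _ => ?_
    rw [← add_mul]
    exact mul_le_mul_of_nonneg_right (by linarith [neg_abs_le (t - u)]) (hg0 t)
  have hright : (∫ t in z..b, (t - z) * g t) + (z - u) * ∫ t in z..b, g t
      ≤ ∫ t in z..b, |t - u| * g t := by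
    rw [← intervalIntegral.integral_const_mul, ← intervalIntegral.integral_add
      (by apply Continuous.intervalIntegrable; fun_prop)
      (by apply Continuous.intervalIntegrable; fun_prop)]
    refine intervalIntegral.integral_mono_on hzb
      (by apply Continuous.intervalIntegrable; fun_prop)
      (by apply Continuous.intervalIntegrable; fun_prop) fun t _ => ?_
    rw [← add_mul]
    exact mul_le_mul_of_nonneg_right (by linarith [le_abs_self (t - u)]) (hg0 t)
  rw [integral_abs_sub_mul_eq hg haz hzb, ← intervalIntegral.integral_add_adjacent_intervals
    (f := fun t => |t - u| * g t) (b := z) (by apply Continuous.intervalIntegrable; fun_prop)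
    (by apply Continuous.intervalIntegrable; fun_prop)]
  rw [hmed] at hleft
  linarith

lemma integral_exp_mul_eq {α : ℝ} (hα : α ≠ 0) (a b : ℝ) :
    ∫ t in a..b, exp (α * t) = (exp (α * b) - exp (α * a)) / α := by
  rw [intervalIntegral.integral_comp_mul_left (fun t => exp t) hα, integral_exp, smul_eq_mul,
    inv_mul_eq_div]

lemma integral_sub_mul_exp_eq {α : ℝ} (hα : α ≠ 0) (a b z : ℝ) :
    ∫ t in a..b, (t - z) * exp (α * t) =
      exp (α * b) * ((b - z) / α - 1 / α ^ 2) - exp (α * a) * ((a - z) / α - 1 / α ^ 2) := by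
  refine intervalIntegral.integral_eq_sub_of_hasDerivAt
    (f := fun t => exp (α * t) * ((t - z) / α - 1 / α ^ 2)) (fun t _ => ?_)
    (by apply Continuous.intervalIntegrable; fun_prop)
  have h := (((hasDerivAt_id' t).const_mul α).exp).mul
    (((hasDerivAt_id' t).sub_const z).div_const α |>.sub_const (1 / α ^ 2))
  refine h.congr_deriv ?_
  field_simp
  ring

lemma integral_abs_sub_mul_exp_of_median {α a z b : ℝ} (hα : α ≠ 0) (haz : a ≤ z) (hzb : z ≤ b)
    (hz : exp (α * z) = (exp (α * a) + exp (α * b)) / 2) :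
    ∫ t in a..b, |t - z| * exp (α * t) = mulLogGap (exp (α * a)) (exp (α * b)) / α ^ 2 := by
  have hflip : ∫ t in a..z, (z - t) * exp (α * t) = -∫ t in a..z, (t - z) * exp (α * t) := by
    rw [← intervalIntegral.integral_neg]
    simp only [← neg_mul, neg_sub]
  rw [integral_abs_sub_mul_eq (by fun_prop) haz hzb, hflip, integral_sub_mul_exp_eq hα,
    integral_sub_mul_exp_eq hα, mulLogGap, ← hz, log_exp, log_exp, log_exp, sub_self, zero_div,
    zero_sub, mul_neg, hz]
  field_simp
  ring

lemma log_two_mul_integral_exp_mul_le_of_pos {α a x b : ℝ} (hα : 0 < α) (hax : a ≤ x)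
    (hxb : x ≤ b) (u : ℝ) :
    log 2 * ((∫ t in a..x, exp (α * t)) * ∫ t in x..b, exp (α * t)) ≤
      exp (α * x) * ∫ t in a..b, |t - u| * exp (α * t) := by
  set A := exp (α * a)
  set X := exp (α * x)
  set B := exp (α * b)
  have hA : 0 < A := exp_pos _
  have hAX : A ≤ X := exp_le_exp.2 (mul_le_mul_of_nonneg_left hax hα.le)
  have hXB : X ≤ B := exp_le_exp.2 (mul_le_mul_of_nonneg_left hxb hα.le)
  set z := log ((A + B) / 2) / α
  have hz : exp (α * z) = (A + B) / 2 := by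
    rw [mul_div_cancel₀ _ hα.ne', exp_log (by positivity)]
  have haz : a ≤ z := le_of_mul_le_mul_left (exp_le_exp.1 (by rw [hz]; linarith)) hα
  have hzb : z ≤ b := le_of_mul_le_mul_left (exp_le_exp.1 (by rw [hz]; linarith)) hα
  have hW := integral_abs_sub_mul_le_of_median (by fun_prop) (fun t => (exp_pos (α * t)).le)
    haz hzb (by rw [integral_exp_mul_eq hα.ne', integral_exp_mul_eq hα.ne', hz]; ring) u
  rw [integral_abs_sub_mul_exp_of_median hα.ne' haz hzb hz] at hW
  have hgap := log_two_mul_sqrt_sub_sqrt_sq_le_mulLogGap hA (hAX.trans hXB)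
  have hamgm : (X - A) * (B - X) ≤ X * (√B - √A) ^ 2 := by
    nlinarith [sq_nonneg (X - √A * √B), sq_sqrt hA.le, sq_sqrt (hA.trans_le (hAX.trans hXB)).le]
  rw [integral_exp_mul_eq hα.ne', integral_exp_mul_eq hα.ne']
  have hlog2 : 0 ≤ log 2 := log_nonneg one_le_two
  calc log 2 * ((X - A) / α * ((B - X) / α)) = log 2 * ((X - A) * (B - X)) / α ^ 2 := by ring
    _ ≤ X * (log 2 * (√B - √A) ^ 2) / α ^ 2 := by
      gcongr ?_ / _
      linarith [mul_le_mul_of_nonneg_left hamgm hlog2]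
    _ ≤ X * mulLogGap A B / α ^ 2 := by gcongr
    _ ≤ X * ∫ t in a..b, |t - u| * exp (α * t) := by rw [mul_div_assoc]; gcongr

lemma log_two_mul_sub_mul_sub_le_integral_abs_sub {a x b : ℝ} (hax : a ≤ x) (hxb : x ≤ b)
    (u : ℝ) : log 2 * ((x - a) * (b - x)) ≤ ∫ t in a..b, |t - u| := by
  have haz : a ≤ (a + b) / 2 := by linarith
  have hzb : (a + b) / 2 ≤ b := by linarith
  have hW := integral_abs_sub_mul_le_of_median continuous_const (fun _ => zero_le_one) haz hzb
    (by simp; ring) u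
  rw [integral_abs_sub_mul_eq continuous_const haz hzb] at hW
  simp only [mul_one] at hW
  rw [intervalIntegral.integral_sub intervalIntegrable_const intervalIntegral.intervalIntegrable_id,
    intervalIntegral.integral_sub intervalIntegral.intervalIntegrable_id intervalIntegrable_const,
    integral_id, integral_id] at hW
  simp only [intervalIntegral.integral_const, smul_eq_mul] at hW
  have hlog2 : log 2 ≤ 1 := by linarith [log_two_lt_d9]
  nlinarith [sq_nonneg (a + b - 2 * x), mul_nonneg (sub_nonneg.2 hax) (sub_nonneg.2 hxb)]

lemma log_two_mul_integral_exp_mul_le {α a x b : ℝ} (hα : 0 ≤ α) (hax : a ≤ x) (hxb : x ≤ b)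
    (u : ℝ) :
    log 2 * ((∫ t in a..x, exp (α * t)) * ∫ t in x..b, exp (α * t)) ≤
      exp (α * x) * ∫ t in a..b, |t - u| * exp (α * t) := by
  rcases hα.eq_or_lt with rfl | hα
  · simpa using log_two_mul_sub_mul_sub_le_integral_abs_sub hax hxb u
  · exact log_two_mul_integral_exp_mul_le_of_pos hα hax hxb u

lemma mul_log_two_mul_integral_exp_mul_le {α ε a x b : ℝ} (hα : 0 ≤ α) (hε : 0 ≤ ε)
    (hax : a ≤ x) (hxb : x + ε ≤ b) (u : ℝ) :
    ε * log 2 * ((∫ t in a..x, exp (α * t)) * ∫ t in x + ε..b, exp (α * t)) ≤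
      (∫ t in x..x + ε, exp (α * t)) * ∫ t in a..b, |t - u| * exp (α * t) := by
  have hxε : x ≤ x + ε := le_add_of_nonneg_right hε
  have hleft : 0 ≤ ∫ t in a..x, exp (α * t) :=
    intervalIntegral.integral_nonneg hax fun t _ => (exp_pos _).le
  have hW : 0 ≤ ∫ t in a..b, |t - u| * exp (α * t) :=
    intervalIntegral.integral_nonneg (hax.trans (hxε.trans hxb)) fun t _ => by positivity
  have htail : ∫ t in x + ε..b, exp (α * t) ≤ ∫ t in x..b, exp (α * t) := by
    rw [← intervalIntegral.integral_add_adjacent_intervals (a := x) (b := x + ε) (c := b)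
      (by apply Continuous.intervalIntegrable; fun_prop)
      (by apply Continuous.intervalIntegrable; fun_prop)]
    linarith [intervalIntegral.integral_nonneg (μ := volume) hxε fun t _ => (exp_pos (α * t)).le]
  have hslab : ε * exp (α * x) ≤ ∫ t in x..x + ε, exp (α * t) := by
    have := intervalIntegral.integral_mono_on hxε (intervalIntegrable_const (μ := volume))
      (by apply Continuous.intervalIntegrable; fun_prop)
      fun t ht => exp_le_exp.2 (mul_le_mul_of_nonneg_left ht.1 hα)
    simpa using this
  calc ε * log 2 * ((∫ t in a..x, exp (α * t)) * ∫ t in x + ε..b, exp (α * t))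
      ≤ ε * (log 2 * ((∫ t in a..x, exp (α * t)) * ∫ t in x..b, exp (α * t))) := by
        rw [mul_assoc]; gcongr
    _ ≤ ε * (exp (α * x) * ∫ t in a..b, |t - u| * exp (α * t)) := by
        gcongr ε * ?_
        exact log_two_mul_integral_exp_mul_le hα hax (hxε.trans hxb) u
    _ = ε * exp (α * x) * ∫ t in a..b, |t - u| * exp (α * t) := by ring
    _ ≤ (∫ t in x..x + ε, exp (α * t)) * ∫ t in a..b, |t - u| * exp (α * t) := by gcongr

lemma exists_gap_of_sSup_le {a b ε : ℝ} (hε : 0 < ε) {P J Q : Set ℝ} (hP : P.Nonempty)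
    (hQ : Q.Nonempty) (hPab : P ⊆ Icc a b) (hQab : Q ⊆ Icc a b) (hcover : Icc a b ⊆ P ∪ J ∪ Q)
    (hsep : ∀ s ∈ P, ∀ t ∈ Q, ε ≤ |s - t|) (hle : sSup P ≤ sSup Q) :
    ∃ c, a ≤ c ∧ P ⊆ Icc a c ∧ c + ε ≤ b ∧ Ioo c (c + ε) ⊆ J ∧ Disjoint (Ioo c (c + ε)) Q := by
  have hPc : ∀ s ∈ P, s ≤ sSup P := fun s hs => le_csSup ⟨b, fun s hs => (hPab hs).2⟩ hs
  have hbeyond : ∀ t ∈ Q, sSup P < t + ε → sSup P + ε ≤ t := fun t ht hlt => by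
    refine le_sub_iff_add_le.1 (csSup_le hP fun s hs => ?_)
    have := hsep s hs t ht
    cases abs_cases (s - t) <;> linarith [hPc s hs]
  obtain ⟨t, ht, hlt⟩ := exists_lt_of_lt_csSup hQ (sub_lt_self (sSup Q) hε)
  have hgapQ : Disjoint (Ioo (sSup P) (sSup P + ε)) Q := Set.disjoint_left.2 fun r hr hrQ => by
    linarith [hr.2, hbeyond r hrQ (by linarith [hr.1])]
  obtain ⟨s, hs⟩ := hP
  have hab : a ≤ sSup P := (hPab hs).1.trans (hPc s hs)
  have hcb : sSup P + ε ≤ b := (hbeyond t ht (by linarith)).trans (hQab ht).2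
  refine ⟨sSup P, hab, fun s hs => ⟨(hPab hs).1, hPc s hs⟩, hcb, fun r hr => ?_, hgapQ⟩
  rcases hcover ⟨hab.trans hr.1.le, hr.2.le.trans hcb⟩ with (hrP | hrJ) | hrQ
  · linarith [hr.1, hPc r hrP]
  · exact hrJ
  · exact (Set.disjoint_left.1 hgapQ hr hrQ).elim

lemma exists_intervals_of_gap {ρ : ℝ → ℝ} (hρ : Continuous ρ) (hρ0 : ∀ t, 0 ≤ ρ t)
    (hρm : Monotone ρ) {a b c ε : ℝ} {P J Q : Set ℝ} (hQm : MeasurableSet Q) (hε : 0 ≤ ε)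
    (hac : a ≤ c) (hcb : c + ε ≤ b) (hPc : P ⊆ Icc a c) (hQab : Q ⊆ Icc a b) (hJab : J ⊆ Icc a b)
    (hPQ : Disjoint P Q) (hgapJ : Ioo c (c + ε) ⊆ J) (hgapQ : Disjoint (Ioo c (c + ε)) Q) :
    ∃ x, a ≤ x ∧ x + ε ≤ b ∧ ∫ t in P, ρ t = ∫ t in a..x, ρ t ∧
      ∫ t in Q, ρ t ≤ ∫ t in x + ε..b, ρ t ∧ ∫ t in x..x + ε, ρ t ≤ ∫ t in J, ρ t := by
  have hab : a ≤ b := hac.trans ((le_add_of_nonneg_right hε).trans hcb)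
  have hint : ∀ p q, IntervalIntegrable ρ volume p q := hρ.intervalIntegrable
  have hintOn : ∀ {s : Set ℝ}, s ⊆ Icc a b → IntegrableOn ρ s := fun hs =>
    hρ.integrableOn_Icc.mono_set hs
  have hsub : ∀ {s : Set ℝ} {p q : ℝ}, p ≤ q → s ⊆ Icc p q → ∫ t in s, ρ t ≤ ∫ t in p..q, ρ t :=
    fun hpq hs => by
      rw [intervalIntegral.integral_of_le hpq, ← integral_Icc_eq_integral_Ioc]
      exact setIntegral_mono_set hρ.integrableOn_Icc (ae_of_all _ hρ0) hs.eventuallyLE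
  obtain ⟨x, ⟨hax, hxc⟩, hx⟩ := intermediate_value_Icc hac
    (intervalIntegral.continuous_primitive hint a).continuousOn
    ⟨by simpa using integral_nonneg hρ0, hsub hac hPc⟩
  simp only at hx
  have hslab : ∫ t in x..x + ε, ρ t ≤ ∫ t in Ioo c (c + ε), ρ t :=
    calc ∫ t in x..x + ε, ρ t ≤ ∫ t in x..x + ε, ρ (t + (c - x)) :=
          intervalIntegral.integral_mono_on (le_add_of_nonneg_right hε) (hint _ _)
            (by apply Continuous.intervalIntegrable; fun_prop) fun t _ => hρm (by linarith)
      _ = ∫ t in Ioo c (c + ε), ρ t := by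
          rw [intervalIntegral.integral_comp_add_right, add_sub_cancel, add_right_comm,
            add_sub_cancel, intervalIntegral.integral_of_le (le_add_of_nonneg_right hε),
            integral_Ioc_eq_integral_Ioo]
  have hPab : P ⊆ Icc a b := hPc.trans (Icc_subset_Icc_right (by linarith))
  have hgapab : Ioo c (c + ε) ⊆ Icc a b := Ioo_subset_Icc_self.trans (Icc_subset_Icc hac hcb)
  have hdisjoint :
      (∫ t in P, ρ t) + (∫ t in Q, ρ t) + ∫ t in Ioo c (c + ε), ρ t ≤ ∫ t in a..b, ρ t := by
    rw [← setIntegral_union hPQ hQm (hintOn hPab) (hintOn hQab),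
      ← setIntegral_union (disjoint_union_left.2 ⟨?_, hgapQ.symm⟩) measurableSet_Ioo
        (hintOn (union_subset hPab hQab)) (hintOn hgapab)]
    · exact hsub hab (union_subset (union_subset hPab hQab) hgapab)
    · exact Set.disjoint_left.2 fun r hrP hr => by linarith [hr.1, (hPc hrP).2]
  have hsplit := intervalIntegral.integral_add_adjacent_intervals (hint a x) (hint x (x + ε))
  have hsplit' := intervalIntegral.integral_add_adjacent_intervals (hint a (x + ε)) (hint (x + ε) b)
  refine ⟨x, hax, by linarith, hx.symm, by linarith, hslab.trans ?_⟩
  exact setIntegral_mono_set (hintOn hJab) (ae_of_all _ hρ0) hgapJ.eventuallyLE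

lemma setIntegral_comp_neg {E : Type*} [NormedAddCommGroup E] [NormedSpace ℝ E] (f : ℝ → E)
    (s : Set ℝ) : ∫ x in s, f (-x) = ∫ x in -s, f x := by
  simpa using (Measure.measurePreserving_neg (volume : Measure ℝ)).setIntegral_preimage_emb
    (Homeomorph.neg ℝ).measurableEmbedding f (-s)

theorem isoperimetric_exp_needle {α a b ε : ℝ} (hε : 0 < ε) {J₁ J₂ J₃ : Set ℝ}
    (hm₁ : MeasurableSet J₁) (hm₃ : MeasurableSet J₃) (hcover : J₁ ∪ J₂ ∪ J₃ = Icc a b)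
    (hsep : ∀ s ∈ J₁, ∀ t ∈ J₃, ε ≤ |s - t|) (u : ℝ) :
    ε * log 2 * ((∫ t in J₁, exp (α * t)) * ∫ t in J₃, exp (α * t)) ≤
      (∫ t in J₂, exp (α * t)) * ∫ t in Icc a b, |t - u| * exp (α * t) := by
  wlog hα : 0 ≤ α generalizing α a b J₁ J₂ J₃ u
  · have h := this (α := -α) (a := -b) (b := -a) (J₂ := -J₂) hm₁.neg hm₃.neg
      (by rw [← union_neg, ← union_neg, hcover, neg_Icc])
      (fun s hs t ht => by simpa only [neg_sub_neg, abs_sub_comm] using hsep _ hs _ ht) (-u)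
      (by linarith)
    rw [← neg_Icc] at h
    simpa only [← setIntegral_comp_neg, neg_mul_neg, neg_sub_neg, abs_sub_comm] using h
  wlog hle : sSup J₁ ≤ sSup J₃ generalizing J₁ J₃
  · have h := this hm₃ hm₁ (by rw [← hcover]; ac_rfl)
      (fun s hs t ht => by simpa [abs_sub_comm] using hsep t ht s hs) (le_of_not_ge hle)
    rwa [mul_comm (∫ t in J₃, exp (α * t))] at h
  have hJ₁ : J₁ ⊆ Icc a b := hcover ▸ subset_union_left.trans subset_union_left
  have hJ₂ : J₂ ⊆ Icc a b := hcover ▸ subset_union_right.trans subset_union_left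
  have hJ₃ : J₃ ⊆ Icc a b := hcover ▸ subset_union_right
  have hW : 0 ≤ ∫ t in Icc a b, |t - u| * exp (α * t) := integral_nonneg fun t => by positivity
  have hJ₂0 : 0 ≤ ∫ t in J₂, exp (α * t) := integral_nonneg fun t => (exp_pos _).le
  rcases J₁.eq_empty_or_nonempty with rfl | hne₁
  · simpa using mul_nonneg hJ₂0 hW
  rcases J₃.eq_empty_or_nonempty with rfl | hne₃
  · simpa using mul_nonneg hJ₂0 hW
  obtain ⟨c, hac, hPc, hcb, hgapJ, hgapQ⟩ :=
    exists_gap_of_sSup_le hε hne₁ hne₃ hJ₁ hJ₃ hcover.ge hsep hle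
  obtain ⟨x, hax, hxb, hP, hQ, hJ⟩ := exists_intervals_of_gap (ρ := fun t => exp (α * t))
    (by fun_prop) (fun t => (exp_pos _).le)
    (fun s t hst => exp_le_exp.2 (mul_le_mul_of_nonneg_left hst hα)) hm₃ hε.le hac hcb hPc hJ₃
    hJ₂ (Set.disjoint_left.2 fun s hs₁ hs₃ => by simpa [hε.not_ge] using hsep s hs₁ s hs₃)
    hgapJ hgapQ
  have hab : a ≤ b := hac.trans ((le_add_of_nonneg_right hε.le).trans hcb)
  rw [integral_Icc_eq_integral_Ioc, ← intervalIntegral.integral_of_le hab] at hW ⊢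
  calc ε * log 2 * ((∫ t in J₁, exp (α * t)) * ∫ t in J₃, exp (α * t))
      ≤ ε * log 2 * ((∫ t in a..x, exp (α * t)) * ∫ t in x + ε..b, exp (α * t)) := by
        rw [hP]
        gcongr
        exact intervalIntegral.integral_nonneg hax fun t _ => (exp_pos _).le
    _ ≤ (∫ t in x..x + ε, exp (α * t)) * ∫ t in a..b, |t - u| * exp (α * t) :=
        mul_log_two_mul_integral_exp_mul_le hα hε.le hax hxb u
    _ ≤ (∫ t in J₂, exp (α * t)) * ∫ t in a..b, |t - u| * exp (α * t) := by gcongr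

theorem stmt_10_general (a b : ℝ) (ε : ℝ) (hε : 0 < ε) (α : ℝ)
    (J₁ J₂ J₃ : Set ℝ)
    (hm₁ : MeasurableSet J₁) (hm₃ : MeasurableSet J₃)
    (hcover : J₁ ∪ J₂ ∪ J₃ = Set.Icc a b)
    (hsep : ∀ s ∈ J₁, ∀ t ∈ J₃, ε ≤ |s - t|)
    (u : ℝ)
    (M m : ℝ)
    (hM : M = ∫ t in Set.Icc a b, Real.exp (α * t))
    (hm : m = (1 / M) * ∫ t in Set.Icc a b, |t - u| * Real.exp (α * t)) :
    (m / (ε * Real.log 2)) * M * (∫ t in J₂, Real.exp (α * t)) ≥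
      (∫ t in J₁, Real.exp (α * t)) * (∫ t in J₃, Real.exp (α * t)) := by
  have key := isoperimetric_exp_needle (α := α) hε hm₁ hm₃ hcover hsep u
  have hεlog : 0 < ε * log 2 := mul_pos hε (log_pos one_lt_two)
  rcases eq_or_ne M 0 with hM0 | hM0
  · have hJ₁ : ∫ t in J₁, exp (α * t) ≤ M := hM ▸ setIntegral_mono_set
      (by fun_prop : Continuous fun t => exp (α * t)).integrableOn_Icc
      (ae_of_all _ fun t => (exp_pos _).le)
      (hcover ▸ subset_union_left.trans subset_union_left : J₁ ⊆ _).eventuallyLE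
    have hJ₁0 : 0 ≤ ∫ t in J₁, exp (α * t) := integral_nonneg fun t => (exp_pos _).le
    rw [hM0, le_antisymm (hM0 ▸ hJ₁) hJ₁0]
    simp
  · have hmM : m * M = ∫ t in Icc a b, |t - u| * exp (α * t) := by
      rw [hm, one_div, mul_comm, mul_inv_cancel_left₀ hM0]
    rw [show m / (ε * log 2) * M * (∫ t in J₂, exp (α * t)) =
        m * M * (∫ t in J₂, exp (α * t)) / (ε * log 2) by ring, hmM, ge_iff_le, le_div_iff₀ hεlog]
    linarith

/-- One-dimensional isoperimetric inequality for exponential needles (KLS): for a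
measurable partition `J₁ ∪ J₂ ∪ J₃ = [a,b]` with `dist(J₁,J₃) ≥ ε` and the measure
`e^{αt} dt`, `(m/(ε log 2))·μ([a,b])·μ(J₂) ≥ μ(J₁)·μ(J₃)`. -/
theorem stmt_10 (a b : ℝ) (hab : a ≤ b) (ε : ℝ) (hε : 0 < ε) (α : ℝ)
    (J₁ J₂ J₃ : Set ℝ)
    (hm₁ : MeasurableSet J₁) (hm₂ : MeasurableSet J₂) (hm₃ : MeasurableSet J₃)
    (hd₁₂ : Disjoint J₁ J₂) (hd₂₃ : Disjoint J₂ J₃) (hd₁₃ : Disjoint J₁ J₃)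
    (hcover : J₁ ∪ J₂ ∪ J₃ = Set.Icc a b)
    (hsep : ∀ s ∈ J₁, ∀ t ∈ J₃, ε ≤ |s - t|)
    (u : ℝ) (hu : u ∈ Set.Icc a b)
    (M m : ℝ)
    (hM : M = ∫ t in Set.Icc a b, Real.exp (α * t))
    (hm : m = (1 / M) * ∫ t in Set.Icc a b, |t - u| * Real.exp (α * t)) :
    (m / (ε * Real.log 2)) * M * (∫ t in J₂, Real.exp (α * t)) ≥
      (∫ t in J₁, Real.exp (α * t)) * (∫ t in J₃, Real.exp (α * t)) :=
  stmt_10_general a b ε hε α J₁ J₂ J₃ hm₁ hm₃ hcover hsep u M m hM hm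
end

section
/- Let P and Q be Markov transition kernels on a measurable space, and let P', Q' be the kernels obtained from P, Q by applying a Metropolis filter with respect to an acceptance function with rejection probabilities at most r at each point. Then d_TV(P'_x, Q'_y) ≤ d_TV(P_x, Q_y) + 2r for all points x, y. -/
open MeasureTheory Real Set

/-- Total variation distance between two (finite) measures. -/
noncomputable def tvDist {α : Type*} [MeasurableSpace α] (μ ν : Measure α) : ℝ :=
  ⨆ s : Set α, |(μ s).toReal - (ν s).toReal|

/-!
The filtered measure `P'_x` agrees with `P_x` up to mass `r` on every set: its absolutely
continuous part lies between `(1 - r) • P_x` and `P_x`, and the atom at `x` has mass at most `r`.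
Moving both one-step distributions by at most `r` on every set moves their total variation
distance by at most `2r`.
-/

section

variable {α : Type*} [MeasurableSpace α]

lemma abs_toReal_sub_le_tvDist (μ ν : Measure α) [IsProbabilityMeasure μ]
    [IsProbabilityMeasure ν] (s : Set α) :
    |(μ s).toReal - (ν s).toReal| ≤ tvDist μ ν := by
  refine le_ciSup (f := fun t => |(μ t).toReal - (ν t).toReal|) ⟨1, ?_⟩ s
  rintro _ ⟨t, rfl⟩
  exact abs_sub_le_of_nonneg_of_le measureReal_nonneg measureReal_le_one
    measureReal_nonneg measureReal_le_one

lemma tvDist_le_tvDist_add_of_abs_sub_le {μ ν μ' ν' : Measure α} [IsProbabilityMeasure μ]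
    [IsProbabilityMeasure ν] {a b : ℝ} (hμ : ∀ s, |(μ' s).toReal - (μ s).toReal| ≤ a)
    (hν : ∀ s, |(ν' s).toReal - (ν s).toReal| ≤ b) :
    tvDist μ' ν' ≤ tvDist μ ν + (a + b) :=
  ciSup_le fun s => by
    have hμs := abs_le.mp (hμ s)
    have hνs := abs_le.mp (hν s)
    have hs := abs_le.mp (abs_toReal_sub_le_tvDist μ ν s)
    rw [abs_le]
    constructor <;> linarith

/-- The Metropolis filter of `μ` at `x`: a point `z` proposed by `μ` is rejected with probability
`ρ z`, and the rejected mass is put on `x`. -/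
noncomputable def metropolisFilter (μ : Measure α) (ρ : α → ℝ) (x : α) : Measure α :=
  μ.withDensity (fun z => ENNReal.ofReal (1 - ρ z)) + ENNReal.ofReal (∫ z, ρ z ∂μ) • Measure.dirac x

variable {μ : Measure α} {ρ : α → ℝ} {r : ℝ}

lemma metropolisFilter_apply_le [IsProbabilityMeasure μ] (hρ : ∀ z, 0 ≤ ρ z ∧ ρ z ≤ r)
    (x : α) (s : Set α) :
    metropolisFilter μ ρ x s ≤ μ s + ENNReal.ofReal r := by
  have hdensity : μ.withDensity (fun z => ENNReal.ofReal (1 - ρ z)) ≤ μ :=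
    calc μ.withDensity (fun z => ENNReal.ofReal (1 - ρ z))
        ≤ μ.withDensity 1 :=
          withDensity_mono (ae_of_all _ fun z => ENNReal.ofReal_le_one.mpr (by linarith [hρ z]))
      _ = μ := withDensity_one
  have hrejection : ∫ z, ρ z ∂μ ≤ r :=
    calc ∫ z, ρ z ∂μ ≤ ∫ _, r ∂μ := integral_mono_of_nonneg (ae_of_all _ fun z => (hρ z).1)
          (integrable_const r) (ae_of_all _ fun z => (hρ z).2)
      _ = r := by simp
  rw [metropolisFilter, Measure.add_apply, Measure.smul_apply, smul_eq_mul]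
  exact add_le_add (hdensity s)
    ((mul_le_of_le_one_right' prob_le_one).trans (ENNReal.ofReal_le_ofReal hrejection))

lemma ofReal_one_sub_mul_le_metropolisFilter_apply (hρ : ∀ z, ρ z ≤ r) (x : α) (s : Set α) :
    ENNReal.ofReal (1 - r) * μ s ≤ metropolisFilter μ ρ x s :=
  calc ENNReal.ofReal (1 - r) * μ s = μ.withDensity (fun _ => ENNReal.ofReal (1 - r)) s := by
        rw [withDensity_const, Measure.smul_apply, smul_eq_mul]
    _ ≤ μ.withDensity (fun z => ENNReal.ofReal (1 - ρ z)) s :=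
        withDensity_mono (ae_of_all _ fun z => ENNReal.ofReal_le_ofReal (by linarith [hρ z])) s
    _ ≤ metropolisFilter μ ρ x s := le_self_add

lemma abs_metropolisFilter_apply_sub_le [IsProbabilityMeasure μ]
    (hρ : ∀ z, 0 ≤ ρ z ∧ ρ z ≤ r) (x : α) (s : Set α) :
    |(metropolisFilter μ ρ x s).toReal - (μ s).toReal| ≤ r := by
  have hr : 0 ≤ r := (hρ x).1.trans (hρ x).2
  have hupper := metropolisFilter_apply_le (μ := μ) hρ x s
  have hbound : μ s + ENNReal.ofReal r ≠ ⊤ := by finiteness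
  have hfinite : metropolisFilter μ ρ x s ≠ ⊤ := ne_top_of_le_ne_top hbound hupper
  have hupper' : (metropolisFilter μ ρ x s).toReal ≤ (μ s).toReal + r := by
    simpa [ENNReal.toReal_add, hr] using ENNReal.toReal_mono hbound hupper
  have hlower : (1 - r) * (μ s).toReal ≤ (metropolisFilter μ ρ x s).toReal := by
    have := ENNReal.toReal_mono hfinite
      (ofReal_one_sub_mul_le_metropolisFilter_apply (fun z => (hρ z).2) x s)
    rw [ENNReal.toReal_mul, ENNReal.toReal_ofReal'] at this
    exact (mul_le_mul_of_nonneg_right (le_max_left _ _) measureReal_nonneg).trans this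
  have hμs : (μ s).toReal ≤ 1 := measureReal_le_one (μ := μ)
  rw [abs_le]
  constructor <;> nlinarith

end

theorem stmt_11_general {α : Type*} [MeasurableSpace α]
    (P Q : α → Measure α) (hP : ∀ x, IsProbabilityMeasure (P x))
    (hQ : ∀ x, IsProbabilityMeasure (Q x))
    (r : ℝ)
    (ρ σ : α → α → ℝ)
    (hρ : ∀ x z, 0 ≤ ρ x z ∧ ρ x z ≤ r) (hσ : ∀ x z, 0 ≤ σ x z ∧ σ x z ≤ r)
    (P' Q' : α → Measure α)
    (hP' : ∀ x, P' x = (P x).withDensity (fun z => ENNReal.ofReal (1 - ρ x z)) +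
      (ENNReal.ofReal (∫ z, ρ x z ∂(P x))) • Measure.dirac x)
    (hQ' : ∀ y, Q' y = (Q y).withDensity (fun z => ENNReal.ofReal (1 - σ y z)) +
      (ENNReal.ofReal (∫ z, σ y z ∂(Q y))) • Measure.dirac y)
    (x y : α) :
    tvDist (P' x) (Q' y) ≤ tvDist (P x) (Q y) + 2 * r := by
  have := hP x
  have := hQ y
  rw [hP', hQ', two_mul]
  exact tvDist_le_tvDist_add_of_abs_sub_le (abs_metropolisFilter_apply_sub_le (hρ x) x)
    (abs_metropolisFilter_apply_sub_le (hσ y) y)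

/-- Applying a Metropolis filter with pointwise rejection probability at most `r`
increases total variation distance between one-step distributions by at most `2r`. -/
theorem stmt_11 {α : Type*} [MeasurableSpace α]
    (P Q : α → Measure α) (hP : ∀ x, IsProbabilityMeasure (P x))
    (hQ : ∀ x, IsProbabilityMeasure (Q x))
    (r : ℝ) (hr : 0 ≤ r)
    (ρ σ : α → α → ℝ)
    (hρ : ∀ x z, 0 ≤ ρ x z ∧ ρ x z ≤ r) (hσ : ∀ x z, 0 ≤ σ x z ∧ σ x z ≤ r)
    (P' Q' : α → Measure α)
    (hP' : ∀ x, P' x = (P x).withDensity (fun z => ENNReal.ofReal (1 - ρ x z)) +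
      (ENNReal.ofReal (∫ z, ρ x z ∂(P x))) • Measure.dirac x)
    (hQ' : ∀ y, Q' y = (Q y).withDensity (fun z => ENNReal.ofReal (1 - σ y z)) +
      (ENNReal.ofReal (∫ z, σ y z ∂(Q y))) • Measure.dirac y)
    (x y : α) :
    tvDist (P' x) (Q' y) ≤ tvDist (P x) (Q y) + 2 * r :=
  stmt_11_general P Q hP hQ r ρ σ hρ hσ P' Q' hP' hQ' x y
end

section
/- Let h : [0,∞) → ℝ be convex with h(0) = 0 = min h, and n ≥ 1. Then ∫_0^∞ e^{-h(z)} h(z) z^{n-1} dz ≤ (n+1) ∫_0^∞ e^{-h(z)} z^{n-1} dz, assuming both integrals are finite. -/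
/-!
Shrinking the argument by `a < 1` pays for itself: convexity and `h 0 = 0` give
`h (a z) ≤ a h z`, and `1 + (1 - a) y ≤ e^{(1 - a) y}` turns this into
`e^{-h z} (1 + (1 - a) h z) ≤ e^{-h (a z)}`. Integrating against `z^k` over `(0, ∞)` and
substituting `z ↦ a z` on the right gives `Z + (1 - a) I ≤ a^{-(k+1)} Z` for
`Z = ∫ e^{-h} z^k` and `I = ∫ e^{-h} h z^k`, so `a^{k+1} I ≤ (k+1) Z` by Bernoulli's
inequality, and letting `a → 1` yields `I ≤ (k+1) Z`.
-/

open MeasureTheory Real Set Filter Topology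

theorem ConvexOn.map_smul_le_smul_of_map_zero {E : Type*} [AddCommGroup E] [Module ℝ E]
    {s : Set E} {f : E → ℝ} (hf : ConvexOn ℝ s f) (hs : (0 : E) ∈ s) (hf0 : f 0 = 0)
    {x : E} (hx : x ∈ s) {t : ℝ} (ht₀ : 0 ≤ t) (ht₁ : t ≤ 1) : f (t • x) ≤ t • f x := by
  simpa [hf0] using hf.2 hx hs ht₀ (sub_nonneg.mpr ht₁) (add_sub_cancel t 1)

theorem exp_neg_mul_one_add_le (y t : ℝ) : exp (-y) * (1 + (1 - t) * y) ≤ exp (-(t * y)) :=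
  calc exp (-y) * (1 + (1 - t) * y) ≤ exp (-y) * exp ((1 - t) * y) := by
        gcongr; linarith [add_one_le_exp ((1 - t) * y)]
    _ = exp (-(t * y)) := by rw [← exp_add]; ring_nf

section Scaling

variable {f : ℝ → ℝ} {a : ℝ}

theorem integrableOn_Ioi_comp_mul_mul_pow (ha : 0 < a) (k : ℕ)
    (hf : IntegrableOn (fun z => f z * z ^ k) (Ioi 0)) :
    IntegrableOn (fun z => f (a * z) * z ^ k) (Ioi 0) := by
  have hscaled : IntegrableOn (fun z => f (a * z) * (a * z) ^ k) (Ioi 0) :=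
    (integrableOn_Ioi_comp_mul_left_iff (fun z => f z * z ^ k) 0 ha).mpr (by simpa using hf)
  refine IntegrableOn.congr_fun (hscaled.const_mul (a ^ k)⁻¹) (fun z _ => ?_) measurableSet_Ioi
  field_simp
  ring

theorem pow_succ_mul_integral_Ioi_comp_mul_mul_pow (ha : 0 < a) (k : ℕ) :
    a ^ (k + 1) * ∫ z in Ioi 0, f (a * z) * z ^ k = ∫ z in Ioi 0, f z * z ^ k := by
  have hsubst := integral_comp_mul_left_Ioi' (fun z => f z * z ^ k) 0 ha
  simp only [mul_zero, mul_pow, smul_eq_mul] at hsubst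
  rw [← hsubst, pow_succ, ← integral_const_mul, ← integral_const_mul]
  congr 1 with z
  ring

end Scaling

section ExpectationBound

variable {h : ℝ → ℝ} {k : ℕ}

theorem integral_exp_neg_mul_pow_nonneg : 0 ≤ ∫ z in Ioi 0, exp (-h z) * z ^ k :=
  setIntegral_nonneg measurableSet_Ioi fun z hz => by have : (0 : ℝ) < z := hz; positivity

theorem pow_succ_mul_integral_exp_neg_mul_le (hconv : ConvexOn ℝ (Ici 0) h) (h0 : h 0 = 0)
    (hZ : IntegrableOn (fun z => exp (-h z) * z ^ k) (Ioi 0))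
    (hI : IntegrableOn (fun z => exp (-h z) * h z * z ^ k) (Ioi 0))
    {a : ℝ} (ha₀ : 0 < a) (ha₁ : a < 1) :
    a ^ (k + 1) * ∫ z in Ioi 0, exp (-h z) * h z * z ^ k ≤
      (k + 1) * ∫ z in Ioi 0, exp (-h z) * z ^ k := by
  set Z := ∫ z in Ioi 0, exp (-h z) * z ^ k
  set I := ∫ z in Ioi 0, exp (-h z) * h z * z ^ k
  have hpointwise : ∀ z ∈ Ioi (0 : ℝ),
      exp (-h z) * z ^ k + (1 - a) * (exp (-h z) * h z * z ^ k) ≤ exp (-h (a * z)) * z ^ k := by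
    intro z hz
    have hshrink : h (a * z) ≤ a * h z :=
      hconv.map_smul_le_smul_of_map_zero self_mem_Ici h0 (mem_Ici.mpr (le_of_lt hz)) ha₀.le ha₁.le
    have hexp : exp (-h z) * (1 + (1 - a) * h z) ≤ exp (-h (a * z)) :=
      (exp_neg_mul_one_add_le (h z) a).trans (exp_le_exp.mpr (by linarith))
    have hzk : 0 ≤ z ^ k := pow_nonneg (le_of_lt hz) k
    nlinarith [mul_le_mul_of_nonneg_right hexp hzk]
  have hintegrated : Z + (1 - a) * I ≤ ∫ z in Ioi 0, exp (-h (a * z)) * z ^ k := by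
    rw [← integral_const_mul, ← integral_add hZ (hI.const_mul _)]
    exact setIntegral_mono_on (hZ.add (hI.const_mul _))
      (integrableOn_Ioi_comp_mul_mul_pow (f := fun z => exp (-h z)) ha₀ k hZ)
      measurableSet_Ioi hpointwise
  have hscale : a ^ (k + 1) * ∫ z in Ioi 0, exp (-h (a * z)) * z ^ k = Z :=
    pow_succ_mul_integral_Ioi_comp_mul_mul_pow (f := fun z => exp (-h z)) ha₀ k
  have hbernoulli : 1 - a ^ (k + 1) ≤ (k + 1) * (1 - a) := by
    have := one_add_mul_le_pow (a := a - 1) (by linarith) (k + 1)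
    rw [add_sub_cancel] at this
    push_cast at this
    linarith
  have hZ_nonneg : 0 ≤ Z := integral_exp_neg_mul_pow_nonneg
  have hapow : 0 < a ^ (k + 1) := pow_pos ha₀ _
  have key : (1 - a) * (a ^ (k + 1) * I) ≤ (1 - a) * ((k + 1) * Z) := by
    nlinarith [mul_le_mul_of_nonneg_left hintegrated hapow.le,
      mul_le_mul_of_nonneg_right hbernoulli hZ_nonneg]
  exact le_of_mul_le_mul_left key (sub_pos.mpr ha₁)

theorem integral_exp_neg_mul_mul_pow_le (hconv : ConvexOn ℝ (Ici 0) h) (h0 : h 0 = 0)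
    (hZ : IntegrableOn (fun z => exp (-h z) * z ^ k) (Ioi 0))
    (hI : IntegrableOn (fun z => exp (-h z) * h z * z ^ k) (Ioi 0)) :
    ∫ z in Ioi 0, exp (-h z) * h z * z ^ k ≤ (k + 1) * ∫ z in Ioi 0, exp (-h z) * z ^ k := by
  set I := ∫ z in Ioi 0, exp (-h z) * h z * z ^ k
  have hcont : ContinuousAt (fun a : ℝ => a ^ (k + 1) * I) 1 := by fun_prop
  have hlim : Tendsto (fun a : ℝ => a ^ (k + 1) * I) (𝓝[<] 1) (𝓝 I) := by
    simpa using hcont.tendsto.mono_left nhdsWithin_le_nhds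
  refine le_of_tendsto hlim ?_
  filter_upwards [Ioo_mem_nhdsLT zero_lt_one] with a ha
  exact pow_succ_mul_integral_exp_neg_mul_le hconv h0 hZ hI ha.1 ha.2

end ExpectationBound

theorem stmt_18_general (h : ℝ → ℝ) (hconv : ConvexOn ℝ (Set.Ici (0 : ℝ)) h)
    (h0 : h 0 = 0)
    (n : ℕ)
    (hint : IntegrableOn (fun z => Real.exp (-h z) * z ^ (n - 1)) (Set.Ioi (0 : ℝ)))
    (hint' : IntegrableOn (fun z => Real.exp (-h z) * h z * z ^ (n - 1)) (Set.Ioi (0 : ℝ))) :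
    ∫ z in Set.Ioi (0 : ℝ), Real.exp (-h z) * h z * z ^ (n - 1) ≤
      (n + 1) * ∫ z in Set.Ioi (0 : ℝ), Real.exp (-h z) * z ^ (n - 1) := by
  calc ∫ z in Ioi (0 : ℝ), exp (-h z) * h z * z ^ (n - 1)
      ≤ ((n - 1 : ℕ) + 1) * ∫ z in Ioi (0 : ℝ), exp (-h z) * z ^ (n - 1) :=
        integral_exp_neg_mul_mul_pow_le hconv h0 hint hint'
    _ ≤ (n + 1) * ∫ z in Ioi (0 : ℝ), exp (-h z) * z ^ (n - 1) := by
        gcongr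
        · exact integral_exp_neg_mul_pow_nonneg
        · exact_mod_cast Nat.sub_le n 1

/-- Kalai–Vempala expectation bound (cone case): for `h` convex on `[0,∞)` with
`h(0) = 0 = min h`, `∫_0^∞ e^{-h} h z^{n-1} ≤ (n+1) ∫_0^∞ e^{-h} z^{n-1}`. -/
theorem stmt_18 (h : ℝ → ℝ) (hconv : ConvexOn ℝ (Set.Ici (0 : ℝ)) h)
    (h0 : h 0 = 0) (hnn : ∀ z : ℝ, 0 ≤ z → 0 ≤ h z)
    (n : ℕ) (hn : 1 ≤ n)
    (hint : IntegrableOn (fun z => Real.exp (-h z) * z ^ (n - 1)) (Set.Ioi (0 : ℝ)))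
    (hint' : IntegrableOn (fun z => Real.exp (-h z) * h z * z ^ (n - 1)) (Set.Ioi (0 : ℝ))) :
    ∫ z in Set.Ioi (0 : ℝ), Real.exp (-h z) * h z * z ^ (n - 1) ≤
      (n + 1) * ∫ z in Set.Ioi (0 : ℝ), Real.exp (-h z) * z ^ (n - 1) :=
  stmt_18_general h hconv h0 n hint hint'
end
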